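/- arXiv:1801.06909 — 8 statements merged into one kernel-verified Lean document; each statement's English description precedes it below -/
import Mathlib

section
/- Let c = (c_0, c_1, …, c_{2p+1}) be a type C column sequence and let C_1, …, C_l be its chain decomposition. Then each block C_i has even length and is a chain, and every entry of C_i is strictly greater than every entry of C_{i+1} for 1 ≤ i < l. Conversely, this is the unique way of writing c as a concatenation of even-length chains in which every entry of each block strictly exceeds every entry of the following block. -/
/-!
Both directions are an induction on `c` two entries at a time. `chains (a :: b :: rest)` is
obtained from `chains rest` by `consPair a b`: start a new block `[a, b]` when the first block
of `rest` begins below `b`, and otherwise glue `a, b` in front of it, which keeps it a chain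
because then its head equals `b`. Conversely, in any admissible decomposition of
`a :: b :: rest` the first block is either exactly `[a, b]` or continues with an entry equal
to `b`; removing `a, b` therefore leaves an admissible decomposition `L'` of `rest`, and the
original one is `consPair a b L'`.
-/

/-- A type C column sequence: weakly decreasing, even length, and each
consecutive pair `(c_{2i}, c_{2i+1})` has even sum. -/
def TypeC (c : List ℕ) : Prop :=
  Even c.length ∧ c.Chain' (· ≥ ·) ∧
    ∀ i, 2 * i + 1 < c.length → Even (c.getD (2 * i) 0 + c.getD (2 * i + 1) 0)

/-- A chain `[b_0, b_1, …, b_{2k+1}]`: nonempty, of even length, weakly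
decreasing, with `b_{2i-1} = b_{2i}` for `1 ≤ i ≤ k`. -/
def IsChainSeq (b : List ℕ) : Prop :=
  b ≠ [] ∧ Even b.length ∧ b.Chain' (· ≥ ·) ∧
    ∀ i, 2 * i + 2 < b.length → b.getD (2 * i + 1) 0 = b.getD (2 * i + 2) 0

/-- The chain decomposition of a column sequence: cut after each odd
position `2q+1` such that `c_{2q+1} > c_{2q+2}`. -/
def chains : List ℕ → List (List ℕ)
  | a :: b :: rest =>
    match chains rest with
    | [] => [[a, b]]
    | C :: L => if C.headI < b then [a, b] :: C :: L else (a :: b :: C) :: L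
  | _ => []

/-- A chain is generic if it is `[b_0 = b_1]` (length 2 with equal entries)
or has length `≥ 4` and `b_{2i} > b_{2i+1}` for all `i`. -/
def GenericChain (b : List ℕ) : Prop :=
  (b.length = 2 ∧ b.getD 0 0 = b.getD 1 0) ∨
  (4 ≤ b.length ∧ ∀ i, 2 * i + 1 < b.length → b.getD (2 * i + 1) 0 < b.getD (2 * i) 0)

/-- A column sequence is generic if all of its chains are generic. -/
def GenericSeq (c : List ℕ) : Prop := ∀ C ∈ chains c, GenericChain C

/-- The fundamental degeneration of a quadruple `b_0 ≥ b_1 = b_2 ≥ b_3`. -/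
def fundDeg (b0 b1 b2 b3 : ℕ) : ℕ × ℕ × ℕ × ℕ :=
  if b0 = b1 then
    if b2 = b3 then (b0 + 1, b1 + 1, b2 - 1, b3 - 1)
    else (b0 + 1, b1 + 1, b2 - 2, b3)
  else
    if b2 = b3 then (b0, b1 + 2, b2 - 1, b3 - 1)
    else (b0, b1 + 2, b2 - 2, b3)

/-- Replacement of the four consecutive entries at positions
`2i, 2i+1, 2i+2, 2i+3` by their fundamental degeneration, deleting the
last two entries if the two lowered entries both become `0`. -/
def degenAt (c : List ℕ) (i : ℕ) : List ℕ :=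
  let q := fundDeg (c.getD (2 * i) 0) (c.getD (2 * i + 1) 0)
    (c.getD (2 * i + 2) 0) (c.getD (2 * i + 3) 0)
  let c' := c.take (2 * i) ++ [q.1, q.2.1, q.2.2.1, q.2.2.2] ++ c.drop (2 * i + 4)
  if q.2.2.1 = 0 ∧ q.2.2.2 = 0 then c'.dropLast.dropLast else c'

/-- `Norm(O)`: the smallest collection containing `O` and closed under
fundamental degeneration at an interior pair of a chain (the positions
`(2i+1, 2i+2)` carry an interior pair of a chain exactly when the two
entries there are equal). -/
inductive NormMem (O : List ℕ) : List ℕ → Prop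
  | base : NormMem O O
  | step (c : List ℕ) (i : ℕ) : NormMem O c → 2 * i + 3 < c.length →
      c.getD (2 * i + 1) 0 = c.getD (2 * i + 2) 0 → NormMem O (degenAt c i)

/-- A decomposition of `c` into consecutive blocks, each of which is an
even-length chain, such that every entry of a block strictly exceeds
every entry of the following block. -/
def IsChainDecompOf (L : List (List ℕ)) (c : List ℕ) : Prop :=
  L.flatten = c ∧ (∀ C ∈ L, IsChainSeq C) ∧
    L.Chain' (fun C D => ∀ x ∈ C, ∀ y ∈ D, y < x)

def consPair (a b : ℕ) : List (List ℕ) → List (List ℕ)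
  | [] => [[a, b]]
  | C :: L => if C.headI < b then [a, b] :: C :: L else (a :: b :: C) :: L

theorem chains_cons_cons (a b : ℕ) (rest : List ℕ) :
    chains (a :: b :: rest) = consPair a b (chains rest) := by
  rw [chains]
  cases chains rest <;> rfl

section IsChainSeq

variable {a b c : ℕ} {C D : List ℕ}

theorem isChainSeq_pair : IsChainSeq [a, b] ↔ b ≤ a := by
  simp [IsChainSeq, List.Chain']

theorem isChainSeq_cons_cons_cons :
    IsChainSeq (a :: b :: c :: C) ↔ b ≤ a ∧ b = c ∧ IsChainSeq (c :: C) := by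
  simp only [IsChainSeq, List.Chain', ne_eq, reduceCtorEq, not_false_eq_true, true_and,
    List.length_cons, List.isChain_cons_cons, Nat.even_add_one, not_not]
  constructor
  · rintro ⟨heven, ⟨hab, hbc, hchain⟩, hpairs⟩
    refine ⟨hab, by simpa using hpairs 0 (by omega), heven, hchain, fun i hi => ?_⟩
    simpa [Nat.mul_add] using hpairs (i + 1) (by omega)
  · rintro ⟨hab, rfl, heven, hchain, hpairs⟩
    refine ⟨heven, ⟨hab, le_rfl, hchain⟩, fun i hi => ?_⟩
    rcases i with _ | i
    · simp
    · simpa [Nat.mul_add] using hpairs i (by omega)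

theorem IsChainSeq.exists_eq_cons (h : IsChainSeq D) : ∃ d₀ D', D = d₀ :: D' :=
  List.exists_cons_of_ne_nil h.1

theorem IsChainSeq.exists_eq_cons_cons (h : IsChainSeq D) : ∃ d₀ d₁ D', D = d₀ :: d₁ :: D' := by
  obtain ⟨hne, heven, -⟩ := h
  rcases D with _ | ⟨d₀, _ | ⟨d₁, D'⟩⟩
  · exact absurd rfl hne
  · simp at heven
  · exact ⟨d₀, d₁, D', rfl⟩

theorem IsChainSeq.le_head (h : IsChainSeq (c :: C)) {y : ℕ} (hy : y ∈ c :: C) : y ≤ c := by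
  rcases List.mem_cons.mp hy with rfl | hy
  · rfl
  · exact List.rel_of_pairwise_cons (List.isChain_iff_pairwise.mp h.2.2.1) hy

end IsChainSeq

section IsChainDecompOf

variable {L : List (List ℕ)} {a b : ℕ} {c : List ℕ}

theorem IsChainDecompOf.eq_nil (h : IsChainDecompOf L []) : L = [] := by
  obtain ⟨hflat, hseq, -⟩ := h
  exact List.eq_nil_iff_forall_not_mem.mpr fun C hC =>
    (hseq C hC).1 (List.flatten_eq_nil_iff.mp hflat C hC)

theorem IsChainDecompOf.even_length (h : IsChainDecompOf L c) : Even c.length := by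
  obtain ⟨rfl, hseq, -⟩ := h
  induction L with
  | nil => simp
  | cons C L ih =>
    rw [List.forall_mem_cons] at hseq
    simpa using hseq.1.2.1.add (ih hseq.2)

theorem IsChainDecompOf.consPair (h : IsChainDecompOf L c) (hab : b ≤ a)
    (hb : ∀ x ∈ c.head?, x ≤ b) : IsChainDecompOf (_root_.consPair a b L) (a :: b :: c) := by
  obtain ⟨rfl, hseq, hdrop⟩ := h
  rcases L with _ | ⟨C, L⟩
  · exact ⟨rfl, by simpa [consPair] using isChainSeq_pair.mpr hab, List.isChain_singleton _⟩
  obtain ⟨c₀, C, rfl⟩ := (hseq _ List.mem_cons_self).exists_eq_cons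
  have hC := hseq _ List.mem_cons_self
  have hc₀ : c₀ ≤ b := hb c₀ (by simp)
  rcases hc₀.lt_or_eq with hlt | rfl
  · rw [_root_.consPair, List.headI_cons, if_pos hlt]
    refine ⟨rfl, List.forall_mem_cons.mpr ⟨isChainSeq_pair.mpr hab, hseq⟩,
      List.isChain_cons_cons.mpr ⟨?_, hdrop⟩⟩
    intro x hx y hy
    have := hC.le_head hy
    simp only [List.mem_cons, List.not_mem_nil, or_false] at hx
    omega
  · rw [_root_.consPair, List.headI_cons, if_neg (lt_irrefl _)]
    refine ⟨rfl, List.forall_mem_cons.mpr ⟨isChainSeq_cons_cons_cons.mpr ⟨hab, rfl, hC⟩,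
      (List.forall_mem_cons.mp hseq).2⟩, ?_⟩
    rcases L with _ | ⟨D, L⟩
    · exact List.isChain_singleton _
    obtain ⟨hCD, hdrop⟩ := List.isChain_cons_cons.mp hdrop
    refine List.isChain_cons_cons.mpr ⟨fun x hx y hy => ?_, hdrop⟩
    have := hCD _ List.mem_cons_self y hy
    rcases List.mem_cons.mp hx with rfl | hx
    · omega
    · exact hCD x ((List.mem_cons.mp hx).elim (· ▸ List.mem_cons_self) id) y hy

theorem IsChainDecompOf.exists_eq_consPair (h : IsChainDecompOf L (a :: b :: c)) :
    ∃ L', IsChainDecompOf L' c ∧ L = _root_.consPair a b L' := by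
  obtain ⟨hflat, hseq, hdrop⟩ := h
  rcases L with _ | ⟨D, L⟩
  · simp at hflat
  obtain ⟨d₀, d₁, D, rfl⟩ := (hseq _ List.mem_cons_self).exists_eq_cons_cons
  simp only [List.flatten_cons, List.cons_append, List.cons.injEq] at hflat
  obtain ⟨rfl, rfl, rfl⟩ := hflat
  rw [List.forall_mem_cons] at hseq
  rcases D with _ | ⟨e, E⟩
  · refine ⟨L, ⟨by simp, hseq.2, (List.isChain_cons.mp hdrop).2⟩, ?_⟩
    rcases L with _ | ⟨E, L⟩
    · rfl
    obtain ⟨e, E, rfl⟩ := (hseq.2 _ List.mem_cons_self).exists_eq_cons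
    have hlt : e < d₁ := (List.isChain_cons_cons.mp hdrop).1 d₁ (by simp) e (by simp)
    rw [_root_.consPair, List.headI_cons, if_pos hlt]
  · obtain ⟨-, rfl, hE⟩ := isChainSeq_cons_cons_cons.mp hseq.1
    refine ⟨(d₁ :: E) :: L, ⟨by simp, List.forall_mem_cons.mpr ⟨hE, hseq.2⟩, ?_⟩, ?_⟩
    · obtain ⟨hhead, hL⟩ := List.isChain_cons.mp hdrop
      exact List.isChain_cons.mpr ⟨fun D hD x hx => hhead D hD x (by simp [hx]), hL⟩
    · rw [_root_.consPair, List.headI_cons, if_neg (lt_irrefl _)]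

theorem IsChainDecompOf.eq_chains : ∀ {L : List (List ℕ)} {c : List ℕ},
    IsChainDecompOf L c → L = chains c
  | _, [], h => h.eq_nil
  | _, [_], h => absurd h.even_length (by simp)
  | _, _ :: _ :: _, h => by
    obtain ⟨L', h', rfl⟩ := h.exists_eq_consPair
    rw [chains_cons_cons, h'.eq_chains]

end IsChainDecompOf

theorem isChainDecompOf_chains : ∀ {c : List ℕ}, Even c.length → c.IsChain (· ≥ ·) →
    IsChainDecompOf (chains c) c
  | [], _, _ => ⟨rfl, by simp [chains], List.isChain_nil⟩
  | [_], heven, _ => absurd heven (by simp)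
  | a :: b :: rest, heven, hchain => by
    obtain ⟨hab, hb, hrest⟩ : b ≤ a ∧ (∀ x ∈ rest.head?, x ≤ b) ∧ rest.IsChain (· ≥ ·) := by
      simpa [List.isChain_cons] using hchain
    rw [chains_cons_cons]
    exact (isChainDecompOf_chains (by simpa [Nat.even_add] using heven) hrest).consPair hab hb

/-- the chain decomposition of a type C column sequence is a
decomposition into even-length chains with strict drops between blocks,
and it is the unique such decomposition. -/
theorem chain_decomposition_exists_unique (c : List ℕ) (hc : TypeC c) :
    IsChainDecompOf (chains c) c ∧ ∀ L, IsChainDecompOf L c → L = chains c :=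
  ⟨isChainDecompOf_chains hc.1 hc.2.1, fun _ hL => hL.eq_chains⟩
end

section
/- Let O be a generic type C column sequence. Every O' ∈ Norm(O) satisfies Σ_{i≤j} c'_i ≥ Σ_{i≤j} c_i for every j (after padding with zeros to a common length), with equal total sums; and if O' ≠ O then this inequality is strict for some j. Hence the nilpotent orbit with columns O' is contained in the Zariski closure of the nilpotent orbit with columns O, strictly if O' ≠ O. -/
/-! ### Auxiliary development -/

section NormAux

/-- Pointwise genericity: an equality `c_{2k+1} = c_{2k+2}` forces strict
drops on both sides. -/
private def Wp (C : List ℕ) : Prop :=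
  ∀ k, 2 * k + 2 < C.length → C.getD (2 * k + 1) 0 = C.getD (2 * k + 2) 0 →
    C.getD (2 * k + 1) 0 < C.getD (2 * k) 0 ∧
      (2 * k + 3 < C.length → C.getD (2 * k + 3) 0 < C.getD (2 * k + 2) 0)

private lemma Wp_of_generic {C : List ℕ} (h : GenericChain C) : Wp C := by
  rcases h with ⟨h2, _⟩ | ⟨h4, hs⟩
  · intro k hk; exact absurd hk (by omega)
  · intro k hk _
    refine ⟨hs k (by omega), fun h3 => ?_⟩
    have h' := hs (k + 1) (by omega)
    rwa [show 2 * (k + 1) + 1 = 2 * k + 3 by ring, show 2 * (k + 1) = 2 * k + 2 by ring] at h'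

private lemma getD_cons2 (a b : ℕ) (l : List ℕ) (n : ℕ) :
    (a :: b :: l).getD (n + 2) 0 = l.getD n 0 := by
  simp [List.getD_cons_succ]

private lemma Wp_tail2 {a b : ℕ} {l : List ℕ} (h : Wp (a :: b :: l)) : Wp l := by
  intro k hk he
  have h' := h (k + 1) (by simp; omega)
  have e1 : 2 * (k + 1) + 1 = (2 * k + 1) + 2 := by ring
  have e2 : 2 * (k + 1) + 2 = (2 * k + 2) + 2 := by ring
  have e3 : 2 * (k + 1) + 3 = (2 * k + 3) + 2 := by ring
  have e4 : 2 * (k + 1) = (2 * k) + 2 := by ring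
  rw [e1, e2, e3, e4, getD_cons2, getD_cons2, getD_cons2, getD_cons2] at h'
  have h'' := h' he
  refine ⟨h''.1, fun h3 => h''.2 (by simp; omega)⟩

private lemma chains_first (x y : ℕ) (r : List ℕ) :
    ∃ T L, chains (x :: y :: r) = (x :: y :: T) :: L := by
  cases h : chains r with
  | nil => exact ⟨[], [], by rw [chains, h]⟩
  | cons C L =>
    by_cases hy : C.headI < y
    · exact ⟨[], C :: L, by rw [chains, h]; simp [hy]⟩
    · exact ⟨C, L, by rw [chains, h]; simp [hy]⟩

private lemma Wp_step_up {a b : ℕ} {l : List ℕ} (h : Wp l) (k : ℕ)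
    (hk : 2 * (k + 1) + 2 < (a :: b :: l).length)
    (he : (a :: b :: l).getD (2 * (k + 1) + 1) 0 = (a :: b :: l).getD (2 * (k + 1) + 2) 0) :
    (a :: b :: l).getD (2 * (k + 1) + 1) 0 < (a :: b :: l).getD (2 * (k + 1)) 0 ∧
      (2 * (k + 1) + 3 < (a :: b :: l).length →
        (a :: b :: l).getD (2 * (k + 1) + 3) 0 < (a :: b :: l).getD (2 * (k + 1) + 2) 0) := by
  have g1 : (a :: b :: l).getD (2 * (k + 1)) 0 = l.getD (2 * k) 0 := by
    rw [show 2 * (k + 1) = 2 * k + 2 by ring]; exact getD_cons2 a b l _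
  have g2 : (a :: b :: l).getD (2 * (k + 1) + 1) 0 = l.getD (2 * k + 1) 0 := by
    rw [show 2 * (k + 1) + 1 = (2 * k + 1) + 2 by ring]; exact getD_cons2 a b l _
  have g3 : (a :: b :: l).getD (2 * (k + 1) + 2) 0 = l.getD (2 * k + 2) 0 := by
    rw [show 2 * (k + 1) + 2 = (2 * k + 2) + 2 by ring]; exact getD_cons2 a b l _
  have g4 : (a :: b :: l).getD (2 * (k + 1) + 3) 0 = l.getD (2 * k + 3) 0 := by
    rw [show 2 * (k + 1) + 3 = (2 * k + 3) + 2 by ring]; exact getD_cons2 a b l _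
  have hk' : 2 * k + 2 < l.length := by simp at hk; omega
  rw [g2, g3] at he
  have h' := h k hk' he
  rw [g1, g2, g3, g4]
  exact ⟨h'.1, fun h3 => h'.2 (by simp at h3 ⊢; omega)⟩

private lemma wp_of_chains : ∀ n (c : List ℕ), c.length ≤ n → Even c.length →
    c.Chain' (· ≥ ·) → (∀ C ∈ chains c, Wp C) → Wp c := by
  intro n
  induction n with
  | zero =>
    intro c hc _ _ _ k hk
    exact absurd hk (by omega)
  | succ n ih =>
    intro c hlen heven hdec hch
    match c with
    | [] => intro k hk; exact absurd hk (by simp)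
    | [a] => simp [Nat.even_iff] at heven
    | [a, b] =>
      intro k hk
      exact absurd hk (by simp only [List.length_cons, List.length_nil]; omega)
    | [a, b, x] => simp [Nat.even_iff] at heven
    | a :: b :: x :: y :: r =>
      obtain ⟨T, L, hch1⟩ := chains_first x y r
      have hab : b ≤ a := (List.isChain_cons_cons.1 hdec).1
      have hdec1 : (b :: x :: y :: r).Chain' (· ≥ ·) := (List.isChain_cons_cons.1 hdec).2
      have hbx : x ≤ b := (List.isChain_cons_cons.1 hdec1).1
      have hdec2 : (x :: y :: r).Chain' (· ≥ ·) := (List.isChain_cons_cons.1 hdec1).2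
      have hxy : y ≤ x := (List.isChain_cons_cons.1 hdec2).1
      have hrlen : (x :: y :: r).length ≤ n := by simp at hlen ⊢; omega
      have hreven : Even (x :: y :: r).length := by
        simp [Nat.even_iff] at heven ⊢; omega
      by_cases hcut : x < b
      · have hcc : chains (a :: b :: x :: y :: r) = [a, b] :: (x :: y :: T) :: L := by
          rw [chains, hch1]; simp [List.headI, hcut]
        have hWr : Wp (x :: y :: r) := by
          refine ih _ hrlen hreven hdec2 ?_
          intro C hC
          exact hch C (by rw [hcc]; rw [hch1] at hC; exact List.mem_cons_of_mem _ hC)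
        intro k hk he
        match k with
        | 0 =>
          exfalso
          simp [List.getD_cons_succ, List.getD_cons_zero] at he
          omega
        | k' + 1 => exact Wp_step_up hWr k' hk he
      · have hxb : x = b := le_antisymm hbx (not_lt.1 hcut)
        have hcc : chains (a :: b :: x :: y :: r) = (a :: b :: x :: y :: T) :: L := by
          rw [chains, hch1]; simp [List.headI, hcut]
        have hW1 : Wp (a :: b :: x :: y :: T) := hch _ (by rw [hcc]; exact List.mem_cons_self)
        have hWr : Wp (x :: y :: r) := by
          refine ih _ hrlen hreven hdec2 ?_
          intro C hC
          rw [hch1] at hC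
          rcases List.mem_cons.1 hC with hC | hC
          · exact hC ▸ Wp_tail2 hW1
          · exact hch C (by rw [hcc]; exact List.mem_cons_of_mem _ hC)
        intro k hk he
        match k with
        | 0 =>
          have h0 := hW1 0 (by simp only [List.length_cons]; omega)
            (by exact hxb.symm)
          exact ⟨h0.1, fun _ => h0.2 (by simp only [List.length_cons]; omega)⟩
        | k' + 1 => exact Wp_step_up hWr k' hk he

end NormAux


section NormInv

private def sIf (S : ℕ → Bool) (t : ℕ) : ℕ := if S t then 1 else 0

private def avgc (O : List ℕ) (S : ℕ → Bool) (t : ℕ) : ℕ :=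
  if S t = true ∧ S (t + 1) = true ∧ O.getD (2 * t) 0 = O.getD (2 * t + 1) 0 + 2 then 1 else 0

private def FA (O : List ℕ) (S : ℕ → Bool) (t : ℕ) : ℕ :=
  O.getD (2 * t) 0 + avgc O S t - 2 * sIf S t

private def FB (O : List ℕ) (S : ℕ → Bool) (t : ℕ) : ℕ :=
  O.getD (2 * t + 1) 0 + 2 * sIf S (t + 1) - avgc O S t

private def ValidS (O : List ℕ) (S : ℕ → Bool) : Prop :=
  ∀ t, S t = true → 1 ≤ t ∧ 2 * t + 1 < O.length ∧ O.getD (2 * t - 1) 0 = O.getD (2 * t) 0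

private def InvF (O c : List ℕ) : Prop :=
  ∃ S : ℕ → Bool, ValidS O S ∧
    (c.length = O.length ∨
      (c.length + 2 = O.length ∧ FA O S (c.length / 2) = 0 ∧ FB O S (c.length / 2) = 0)) ∧
    (∀ t, 2 * t < c.length → c.getD (2 * t) 0 = FA O S t) ∧
    (∀ t, 2 * t + 1 < c.length → c.getD (2 * t + 1) 0 = FB O S t)

private lemma getD_mono {l : List ℕ} (h : l.Chain' (· ≥ ·)) {m n : ℕ} (hmn : m ≤ n) :
    l.getD n 0 ≤ l.getD m 0 := by
  rcases lt_or_ge n l.length with hn | hn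
  · have hm : m < l.length := lt_of_le_of_lt hmn hn
    rw [List.getD_eq_getElem _ _ hn, List.getD_eq_getElem _ _ hm]
    rcases eq_or_lt_of_le hmn with rfl | hlt
    · exact le_rfl
    · exact (List.pairwise_iff_getElem.1 (List.isChain_iff_pairwise.mp h)) m n hm hn hlt
  · rw [List.getD_eq_default _ _ hn]
    exact Nat.zero_le _

private lemma getD_take_eq (c : List ℕ) (k m : ℕ) (h : m < k) (h2 : m < c.length) :
    (c.take k).getD m 0 = c.getD m 0 := by
  rw [List.getD_eq_getElem _ _ (by simp [List.length_take]; omega),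
    List.getD_eq_getElem _ _ h2]
  exact List.getElem_take ..

private lemma getD_drop_eq (c : List ℕ) (k m : ℕ) :
    (c.drop k).getD m 0 = c.getD (k + m) 0 := by
  rcases lt_or_ge (k + m) c.length with h | h
  · rw [List.getD_eq_getElem _ _ (by simp [List.length_drop]; omega),
      List.getD_eq_getElem _ _ h]
    exact List.getElem_drop ..
  · rw [List.getD_eq_default _ _ (by simp [List.length_drop]; omega),
      List.getD_eq_default _ _ h]

private lemma decomp4 (c : List ℕ) (p : ℕ) (h : p + 3 < c.length) :
    c = c.take p ++ [c.getD p 0, c.getD (p+1) 0, c.getD (p+2) 0, c.getD (p+3) 0]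
      ++ c.drop (p+4) := by
  rw [List.append_assoc]
  conv_lhs => rw [← List.take_append_drop p c]
  congr 1
  rw [List.drop_eq_getElem_cons (show p < c.length by omega)]
  congr 1
  · exact (List.getD_eq_getElem _ _ (by omega)).symm
  rw [List.drop_eq_getElem_cons (show p + 1 < c.length by omega)]
  congr 1
  · exact (List.getD_eq_getElem _ _ (by omega)).symm
  rw [show p + 1 + 1 = p + 2 by ring,
    List.drop_eq_getElem_cons (show p + 2 < c.length by omega)]
  congr 1
  · exact (List.getD_eq_getElem _ _ (by omega)).symm
  rw [show p + 2 + 1 = p + 3 by ring,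
    List.drop_eq_getElem_cons (show p + 3 < c.length by omega)]
  congr 1
  · exact (List.getD_eq_getElem _ _ (by omega)).symm

private lemma sum_take_append3 (u m w : List ℕ) (n : ℕ) :
    ((u ++ m ++ w).take n).sum =
      (u.take n).sum + ((m.take (n - u.length)).sum + (w.take (n - u.length - m.length)).sum) := by
  rw [List.append_assoc, List.take_append, List.sum_append,
    List.take_append, List.sum_append]

private lemma take4_sum_le (b0 b1 b2 b3 q0 q1 q2 q3 : ℕ) (h0 : b0 ≤ q0)
    (h1 : q0 + q1 = b0 + b1 + 2) (h2 : b0 + b1 + b2 ≤ q0 + q1 + q2)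
    (h3 : q0 + q1 + q2 + q3 = b0 + b1 + b2 + b3) (n : ℕ) :
    (([b0, b1, b2, b3] : List ℕ).take n).sum ≤ (([q0, q1, q2, q3] : List ℕ).take n).sum := by
  match n with
  | 0 => simp
  | 1 => simpa using h0
  | 2 => simp; omega
  | 3 => simp; omega
  | n + 4 =>
    rw [List.take_of_length_le (by simp), List.take_of_length_le (by simp)]
    simp; omega

private lemma take2_sum_le (b0 b1 b2 b3 q0 q1 : ℕ) (h0 : b0 ≤ q0)
    (h1 : q0 + q1 = b0 + b1 + b2 + b3) (n : ℕ) :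
    (([b0, b1, b2, b3] : List ℕ).take n).sum ≤ (([q0, q1] : List ℕ).take n).sum := by
  match n with
  | 0 => simp
  | 1 => simpa using h0
  | n + 2 =>
    rw [List.take_of_length_le (show ([q0,q1] : List ℕ).length ≤ n + 2 by simp)]
    match n with
    | 0 => simp; omega
    | 1 => simp; omega
    | n + 2 =>
      rw [List.take_of_length_le (by simp)]
      simp; omega

end NormInv


section StepLemma

private lemma FA_eq (O : List ℕ) (S : ℕ → Bool) (t m : ℕ) (hm : m = 2 * t) :
    FA O S t = O.getD m 0 + avgc O S t - 2 * sIf S t := by subst hm; rfl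

private lemma FB_eq (O : List ℕ) (S : ℕ → Bool) (t m u : ℕ) (hm : m = 2 * t + 1)
    (hu : u = t + 1) : FB O S t = O.getD m 0 + 2 * sIf S u - avgc O S t := by
  subst hm; subst hu; rfl

private lemma avgc_eq (O : List ℕ) (S : ℕ → Bool) (t a b : ℕ) (ha : a = 2 * t)
    (hb : b = 2 * t + 1) :
    avgc O S t = if S t = true ∧ S (t + 1) = true ∧ O.getD a 0 = O.getD b 0 + 2
      then 1 else 0 := by
  subst ha; subst hb; rfl

private lemma avgc_le (O : List ℕ) (S : ℕ → Bool) (t : ℕ) : avgc O S t ≤ 1 := by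
  unfold avgc; split <;> omega

private lemma sIf_le (S : ℕ → Bool) (t : ℕ) : sIf S t ≤ 1 := by
  unfold sIf; split <;> omega

private lemma sIf_cases (S : ℕ → Bool) (t : ℕ) :
    (S t = true ∧ sIf S t = 1) ∨ (S t = false ∧ sIf S t = 0) := by
  cases h : S t
  · exact Or.inr ⟨rfl, by unfold sIf; rw [h]; rfl⟩
  · exact Or.inl ⟨rfl, by unfold sIf; rw [h]; rfl⟩

private lemma left_spec (g0 g1 b0 b1 A1 B1 a1 s0 : ℕ)
    (hp1 : g0 % 2 = g1 % 2) (hg0 : g1 < g0)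
    (hb0 : b0 + 2 * s0 = g0) (hb1 : b1 = g1) (hs0 : s0 ≤ 1)
    (hA1 : A1 + 2 * s0 = g0 + a1) (hB1 : B1 + a1 = g1 + 2)
    (ha1p : b0 = b1 → a1 = 1) (ha1n : b0 ≠ b1 → a1 = 0) :
    (b0 = b1 → A1 = b0 + 1 ∧ B1 = b1 + 1) ∧ (b0 ≠ b1 → A1 = b0 ∧ B1 = b1 + 2) ∧
      b0 ≤ A1 ∧ A1 + B1 = b0 + b1 + 2 := by
  by_cases hbeq : b0 = b1
  · have := ha1p hbeq; omega
  · have := ha1n hbeq; omega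

private lemma right_spec (g2 g3 b2 b3 A2 B2 a2 s2 : ℕ)
    (hp2 : g2 % 2 = g3 % 2) (hg3 : g3 < g2)
    (hb2 : b2 = g2) (hb3 : b3 = g3 + 2 * s2) (hs2 : s2 ≤ 1)
    (hA2 : A2 + 2 = g2 + a2) (hB2 : B2 + a2 = g3 + 2 * s2)
    (ha2p : b2 = b3 → a2 = 1) (ha2n : b2 ≠ b3 → a2 = 0) :
    (b2 = b3 → A2 = b2 - 1 ∧ B2 = b3 - 1) ∧ (b2 ≠ b3 → A2 = b2 - 2 ∧ B2 = b3) ∧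
      b2 ≤ A2 + 2 ∧ A2 + B2 + 2 = b2 + b3 ∧
      (A2 = 0 ∧ B2 = 0 → g2 = 2 ∧ g3 = 0 ∧ s2 = 0) := by
  by_cases hbeq : b2 = b3
  · have := ha2p hbeq; omega
  · have := ha2n hbeq; omega

private lemma core_spec (g0 g1 g2 g3 b0 b1 b2 b3 A1 B1 A2 B2 a1 a2 s0 s2 : ℕ)
    (hp1 : g0 % 2 = g1 % 2) (hp2 : g2 % 2 = g3 % 2)
    (hg0 : g1 < g0) (hg3 : g3 < g2)
    (hb0 : b0 + 2 * s0 = g0) (hb1 : b1 = g1) (hb2 : b2 = g2) (hb3 : b3 = g3 + 2 * s2)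
    (hs0 : s0 ≤ 1) (hs2 : s2 ≤ 1)
    (hA1 : A1 + 2 * s0 = g0 + a1) (hB1 : B1 + a1 = g1 + 2)
    (hA2 : A2 + 2 = g2 + a2) (hB2 : B2 + a2 = g3 + 2 * s2)
    (ha1p : b0 = b1 → a1 = 1) (ha1n : b0 ≠ b1 → a1 = 0)
    (ha2p : b2 = b3 → a2 = 1) (ha2n : b2 ≠ b3 → a2 = 0) :
    fundDeg b0 b1 b2 b3 = (A1, B1, A2, B2) ∧
      b0 ≤ A1 ∧ A1 + B1 = b0 + b1 + 2 ∧ b0 + b1 + b2 ≤ A1 + B1 + A2 ∧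
      A1 + B1 + A2 + B2 = b0 + b1 + b2 + b3 ∧
      (A2 = 0 ∧ B2 = 0 → g2 = 2 ∧ g3 = 0 ∧ s2 = 0) := by
  obtain ⟨l1, l2, l3, l4⟩ := left_spec g0 g1 b0 b1 A1 B1 a1 s0 hp1 hg0 hb0 hb1 hs0 hA1 hB1
    ha1p ha1n
  obtain ⟨r1, r2, r3, r4, r5⟩ := right_spec g2 g3 b2 b3 A2 B2 a2 s2 hp2 hg3 hb2 hb3 hs2 hA2
    hB2 ha2p ha2n
  refine ⟨?_, l3, l4, by omega, by omega, r5⟩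
  unfold fundDeg
  by_cases hbeq1 : b0 = b1 <;> by_cases hbeq2 : b2 = b3
  · rw [if_pos hbeq1, if_pos hbeq2, (l1 hbeq1).1, (l1 hbeq1).2, (r1 hbeq2).1, (r1 hbeq2).2]
  · rw [if_pos hbeq1, if_neg hbeq2, (l1 hbeq1).1, (l1 hbeq1).2, (r2 hbeq2).1, (r2 hbeq2).2]
  · rw [if_neg hbeq1, if_pos hbeq2, (l2 hbeq1).1, (l2 hbeq1).2, (r1 hbeq2).1, (r1 hbeq2).2]
  · rw [if_neg hbeq1, if_neg hbeq2, (l2 hbeq1).1, (l2 hbeq1).2, (r2 hbeq2).1, (r2 hbeq2).2]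

private lemma getD_mid (c : List ℕ) (i : ℕ) (hl : 2 * i + 3 < c.length) (x0 x1 x2 x3 : ℕ) :
    ∀ m, (c.take (2 * i) ++ [x0, x1, x2, x3] ++ c.drop (2 * i + 4)).getD m 0 =
      if m < 2 * i then c.getD m 0
      else if m = 2 * i then x0 else if m = 2 * i + 1 then x1
      else if m = 2 * i + 2 then x2 else if m = 2 * i + 3 then x3
      else c.getD m 0 := by
  intro m
  have hul : (c.take (2 * i)).length = 2 * i := by rw [List.length_take]; omega
  have huml : (c.take (2 * i) ++ [x0, x1, x2, x3]).length = 2 * i + 4 := by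
    rw [List.length_append, hul]; rfl
  rcases lt_or_ge m (2 * i) with h | h
  · rw [if_pos h, List.getD_append _ _ _ _ (by rw [List.length_append, hul]; omega),
      List.getD_append _ _ _ _ (by omega), getD_take_eq c (2 * i) m h (by omega)]
  · rw [if_neg (by omega)]
    rcases lt_or_ge m (2 * i + 4) with h2 | h2
    · rw [List.getD_append _ _ _ _ (by omega),
        List.getD_append_right _ _ _ _ (by omega), hul]
      have hm : m - 2 * i = 0 ∨ m - 2 * i = 1 ∨ m - 2 * i = 2 ∨ m - 2 * i = 3 := by omega
      rcases hm with hm | hm | hm | hm <;> rw [hm]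
      · rw [if_pos (show m = 2 * i by omega)]; rfl
      · rw [if_neg (show ¬ m = 2 * i by omega), if_pos (show m = 2 * i + 1 by omega)]; rfl
      · rw [if_neg (show ¬ m = 2 * i by omega), if_neg (show ¬ m = 2 * i + 1 by omega),
          if_pos (show m = 2 * i + 2 by omega)]; rfl
      · rw [if_neg (show ¬ m = 2 * i by omega), if_neg (show ¬ m = 2 * i + 1 by omega),
          if_neg (show ¬ m = 2 * i + 2 by omega), if_pos (show m = 2 * i + 3 by omega)]; rfl
    · rw [if_neg (by omega), if_neg (by omega), if_neg (by omega), if_neg (by omega),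
        List.getD_append_right _ _ _ _ (by omega), huml, getD_drop_eq,
        show 2 * i + 4 + (m - (2 * i + 4)) = m by omega]

set_option maxHeartbeats 1600000 in
private lemma step_main (O : List ℕ) (hO : TypeC O) (hPW : Wp O) (c : List ℕ) (i : ℕ)
    (hlen : 2 * i + 3 < c.length) (heq : c.getD (2 * i + 1) 0 = c.getD (2 * i + 2) 0)
    (hinv : InvF O c) :
    InvF O (degenAt c i) ∧ (degenAt c i).sum = c.sum ∧
      (∀ m, (c.take m).sum ≤ ((degenAt c i).take m).sum) ∧
      (c.take (2 * i + 2)).sum < ((degenAt c i).take (2 * i + 2)).sum := by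
  obtain ⟨S, hS, hL, hA, hB⟩ := hinv
  obtain ⟨hOev, hOdec, hOpar⟩ := hO
  have hOev2 : O.length % 2 = 0 := Nat.even_iff.1 hOev
  have hclen : c.length ≤ O.length := by rcases hL with h | h <;> omega
  have hlenO : 2 * i + 3 < O.length := by omega
  -- parities
  have hp1 : O.getD (2 * i) 0 % 2 = O.getD (2 * i + 1) 0 % 2 := by
    obtain ⟨p, hp⟩ := hOpar i (by omega); omega
  have hp2 : O.getD (2 * i + 2) 0 % 2 = O.getD (2 * i + 3) 0 % 2 := by
    obtain ⟨p, hp⟩ := by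
      have := hOpar (i + 1) (by omega)
      rwa [show 2 * (i + 1) + 1 = 2 * i + 3 by ring, show 2 * (i + 1) = 2 * i + 2 by ring]
        at this
    omega
  -- entry formulas
  have hAi := hA i (by omega)
  have hBi := hB i (by omega)
  have hAi1 : c.getD (2 * i + 2) 0 = FA O S (i + 1) := by
    have := hA (i + 1) (by omega)
    rwa [show 2 * (i + 1) = 2 * i + 2 by ring] at this
  have hBi1 : c.getD (2 * i + 3) 0 = FB O S (i + 1) := by
    have := hB (i + 1) (by omega)
    rwa [show 2 * (i + 1) + 1 = 2 * i + 3 by ring] at this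
  have hFBiE := FB_eq O S i (2 * i + 1) (i + 1) rfl rfl
  have hFAi1E := FA_eq O S (i + 1) (2 * i + 2) (by ring)
  have hFBi1E := FB_eq O S (i + 1) (2 * i + 3) (i + 2) (by ring) rfl
  have hFAiE := FA_eq O S i (2 * i) rfl
  -- i+1 is not in S
  have hs1 : S (i + 1) = false := by
    cases hs1 : S (i + 1)
    · rfl
    · exfalso
      obtain ⟨-, -, hsite⟩ := hS (i + 1) hs1
      rw [show 2 * (i + 1) - 1 = 2 * i + 1 by omega, show 2 * (i + 1) = 2 * i + 2 by ring]
        at hsite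
      have hpw := hPW i (by omega) hsite
      have hg3 := hpw.2 (by omega)
      have e3 : sIf S (i + 1) = 1 := by unfold sIf; rw [hs1]; rfl
      have e4 := avgc_le O S i
      have e5 := avgc_le O S (i + 1)
      omega
  have havgi : avgc O S i = 0 := by
    rw [avgc_eq O S i (2 * i) (2 * i + 1) rfl rfl, if_neg]
    rintro ⟨-, h, -⟩
    rw [hs1] at h
    exact absurd h (by simp)
  have havgi1 : avgc O S (i + 1) = 0 := by
    rw [avgc_eq O S (i + 1) (2 * i + 2) (2 * i + 3) (by ring) (by ring), if_neg]
    rintro ⟨h, -, -⟩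
    rw [hs1] at h
    exact absurd h (by simp)
  have hsifi1 : sIf S (i + 1) = 0 := by unfold sIf; rw [hs1]; rfl
  have hb1 : c.getD (2 * i + 1) 0 = O.getD (2 * i + 1) 0 := by omega
  have hb2 : c.getD (2 * i + 2) 0 = O.getD (2 * i + 2) 0 := by omega
  have hv : O.getD (2 * i + 1) 0 = O.getD (2 * i + 2) 0 := by omega
  have hpw := hPW i (by omega) hv
  have hg0 : O.getD (2 * i + 1) 0 < O.getD (2 * i) 0 := hpw.1
  have hg3 : O.getD (2 * i + 3) 0 < O.getD (2 * i + 2) 0 := hpw.2 (by omega)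
  clear hpw
  have hg0ge : 2 ≤ O.getD (2 * i) 0 := by omega
  have hg2ge : 2 ≤ O.getD (2 * i + 2) 0 := by omega
  have hsi_le := sIf_le S i
  have hsi2_le := sIf_le S (i + 2)
  have hb0 : c.getD (2 * i) 0 + 2 * sIf S i = O.getD (2 * i) 0 := by omega
  have hb3 : c.getD (2 * i + 3) 0 = O.getD (2 * i + 3) 0 + 2 * sIf S (i + 2) := by omega
  clear hFAiE hFBiE hFAi1E hFBi1E hAi hBi hAi1 hBi1 havgi havgi1
  -- the new fired set
  set S' : ℕ → Bool := fun t => (t == i + 1) || S t with hS'def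
  have hS'i1 : S' (i + 1) = true := by simp [hS'def]
  have hS'eq : ∀ t, t ≠ i + 1 → S' t = S t := by
    intro t ht; simp [hS'def, ht]
  have hVS' : ValidS O S' := by
    intro t ht
    by_cases h : t = i + 1
    · subst h
      refine ⟨by omega, by omega, ?_⟩
      rw [show 2 * (i + 1) - 1 = 2 * i + 1 by omega, show 2 * (i + 1) = 2 * i + 2 by ring]
      exact hv
    · exact hS t (by rwa [hS'eq t h] at ht)
  have hFA' : ∀ t, t ≠ i + 1 → t + 1 ≠ i + 1 → FA O S' t = FA O S t := by
    intro t h1 h2; unfold FA avgc sIf; rw [hS'eq t h1, hS'eq (t + 1) h2]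
  have hFB' : ∀ t, t ≠ i + 1 → t + 1 ≠ i + 1 → FB O S' t = FB O S t := by
    intro t h1 h2; unfold FB avgc sIf; rw [hS'eq t h1, hS'eq (t + 1) h2]
  have hsifSi' : sIf S' i = sIf S i := by unfold sIf; rw [hS'eq i (by omega)]
  have hsifSi1' : sIf S' (i + 1) = 1 := by unfold sIf; rw [hS'i1]; rfl
  have hsifSi2' : sIf S' (i + 2) = sIf S (i + 2) := by unfold sIf; rw [hS'eq (i + 2) (by omega)]
  have hS'ic : S' i = S i := hS'eq i (by omega)
  have hS'i2c : S' (i + 2) = S (i + 2) := hS'eq (i + 2) (by omega)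
  have havg'iE := avgc_eq O S' i (2 * i) (2 * i + 1) rfl rfl
  have havg'i1E := avgc_eq O S' (i + 1) (2 * i + 2) (2 * i + 3) (by ring) (by ring)
  have hsic := sIf_cases S i
  have hsi2c := sIf_cases S (i + 2)
  have havg'i_le := avgc_le O S' i
  have havg'i1_le := avgc_le O S' (i + 1)
  -- avgc values vs the equalities of entries
  have e1 : (c.getD (2 * i) 0 = c.getD (2 * i + 1) 0 → avgc O S' i = 1) ∧
      (c.getD (2 * i) 0 ≠ c.getD (2 * i + 1) 0 → avgc O S' i = 0) := by
    rcases hsic with ⟨h1, h2⟩ | ⟨h1, h2⟩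
    · constructor
      · intro hbe
        rw [havg'iE, if_pos ⟨by rw [hS'ic]; exact h1, hS'i1, by omega⟩]
      · intro hbe
        rw [havg'iE, if_neg]
        rintro ⟨-, -, hg⟩
        omega
    · constructor
      · intro hbe; exfalso; omega
      · intro hbe
        rw [havg'iE, if_neg]
        rintro ⟨hh, -, -⟩
        rw [hS'ic, h1] at hh
        exact absurd hh (by simp)
  have e2 : (c.getD (2 * i + 2) 0 = c.getD (2 * i + 3) 0 → avgc O S' (i + 1) = 1) ∧
      (c.getD (2 * i + 2) 0 ≠ c.getD (2 * i + 3) 0 → avgc O S' (i + 1) = 0) := by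
    rcases hsi2c with ⟨h1, h2⟩ | ⟨h1, h2⟩
    · constructor
      · intro hbe
        rw [havg'i1E, if_pos ⟨hS'i1, by rw [hS'i2c]; exact h1, by omega⟩]
      · intro hbe
        rw [havg'i1E, if_neg]
        rintro ⟨-, -, hg⟩
        omega
    · constructor
      · intro hbe; exfalso; omega
      · intro hbe
        rw [havg'i1E, if_neg]
        rintro ⟨-, hh, -⟩
        rw [hS'i2c, h1] at hh
        exact absurd hh (by simp)
  -- avgc = 1 forces the corresponding site fired
  have ea2 : avgc O S' (i + 1) = 0 ∨ (avgc O S' (i + 1) = 1 ∧ sIf S (i + 2) = 1) := by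
    rw [havg'i1E]
    split_ifs with h
    · right
      refine ⟨rfl, ?_⟩
      rcases hsi2c with ⟨-, h2⟩ | ⟨h1, -⟩
      · exact h2
      · rw [hS'i2c, h1] at h; exact absurd h.2.1 (by simp)
    · left; rfl
  -- the (+)-form equations for the new entries
  have hFA'i : FA O S' i + 2 * sIf S i = O.getD (2 * i) 0 + avgc O S' i := by
    have := FA_eq O S' i (2 * i) rfl
    rw [hsifSi'] at this
    omega
  have hFB'i : FB O S' i + avgc O S' i = O.getD (2 * i + 1) 0 + 2 := by
    have := FB_eq O S' i (2 * i + 1) (i + 1) rfl rfl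
    rw [hsifSi1'] at this
    omega
  have hFA'i1 : FA O S' (i + 1) + 2 = O.getD (2 * i + 2) 0 + avgc O S' (i + 1) := by
    have := FA_eq O S' (i + 1) (2 * i + 2) (by ring)
    rw [hsifSi1'] at this
    omega
  have hFB'i1 : FB O S' (i + 1) + avgc O S' (i + 1) =
      O.getD (2 * i + 3) 0 + 2 * sIf S (i + 2) := by
    have := FB_eq O S' (i + 1) (2 * i + 3) (i + 2) (by ring) rfl
    rw [hsifSi2'] at this
    rcases ea2 with h | ⟨h1, h2⟩ <;> omega
  obtain ⟨hfd, hn1, hn2, hn3, hn4, hn5⟩ :=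
    core_spec (O.getD (2 * i) 0) (O.getD (2 * i + 1) 0) (O.getD (2 * i + 2) 0)
      (O.getD (2 * i + 3) 0) (c.getD (2 * i) 0) (c.getD (2 * i + 1) 0)
      (c.getD (2 * i + 2) 0) (c.getD (2 * i + 3) 0)
      (FA O S' i) (FB O S' i) (FA O S' (i + 1)) (FB O S' (i + 1))
      (avgc O S' i) (avgc O S' (i + 1)) (sIf S i) (sIf S (i + 2))
      hp1 hp2 hg0 hg3 hb0 hb1 hb2 hb3 hsi_le hsi2_le hFA'i hFB'i hFA'i1 hFB'i1
      e1.1 e1.2 e2.1 e2.2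
  clear e1 e2 ea2 hFA'i hFB'i hFA'i1 hFB'i1 havg'iE havg'i1E hsic havg'i_le havg'i1_le
    hsifSi' hsifSi1' hsifSi2' hS'ic hS'i2c hp1
  -- unfold degenAt
  have hDA : degenAt c i = if FA O S' (i + 1) = 0 ∧ FB O S' (i + 1) = 0 then
      (c.take (2 * i) ++ [FA O S' i, FB O S' i, FA O S' (i + 1), FB O S' (i + 1)]
        ++ c.drop (2 * i + 4)).dropLast.dropLast
    else c.take (2 * i) ++ [FA O S' i, FB O S' i, FA O S' (i + 1), FB O S' (i + 1)]
        ++ c.drop (2 * i + 4) := by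
    simp only [degenAt, hfd]
  have hcsplit := decomp4 c (2 * i) (by omega)
  have hu_len : (c.take (2 * i)).length = 2 * i := by rw [List.length_take]; omega
  have hmid4 : ∀ x0 x1 x2 x3 : ℕ, ([x0, x1, x2, x3] : List ℕ).length = 4 := fun _ _ _ _ => rfl
  by_cases hdrop : FA O S' (i + 1) = 0 ∧ FB O S' (i + 1) = 0
  · -- truncating case
    obtain ⟨hg2v, hg3v, hs2v⟩ := hn5 hdrop
    have hOl : O.length = 2 * i + 4 := by
      by_contra hne
      have h5 : 2 * i + 5 < O.length := by omega
      have hg4le : O.getD (2 * i + 4) 0 ≤ O.getD (2 * i + 3) 0 :=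
        getD_mono hOdec (by omega)
      have hpw2 := hPW (i + 1) (by omega)
        (by rw [show 2 * (i + 1) + 1 = 2 * i + 3 by ring,
          show 2 * (i + 1) + 2 = 2 * i + 4 by ring]; omega)
      have h6 := hpw2.2 (by omega)
      rw [show 2 * (i + 1) + 3 = 2 * i + 5 by ring,
        show 2 * (i + 1) + 2 = 2 * i + 4 by ring] at h6
      omega
    have hcl : c.length = 2 * i + 4 := by
      rcases hL with h | ⟨h, -, -⟩ <;> omega
    have hwnil : c.drop (2 * i + 4) = [] := by
      apply List.drop_eq_nil_of_le
      omega
    rw [hwnil, List.append_nil] at hcsplit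
    have hc'' : degenAt c i = c.take (2 * i) ++ [FA O S' i, FB O S' i] := by
      rw [hDA, if_pos hdrop, hwnil, List.append_nil, hdrop.1, hdrop.2]
      rw [show c.take (2 * i) ++ [FA O S' i, FB O S' i, 0, 0]
        = ((c.take (2 * i) ++ [FA O S' i, FB O S' i, 0]) ++ [0]) from by simp,
        List.dropLast_concat,
        show c.take (2 * i) ++ [FA O S' i, FB O S' i, 0]
        = ((c.take (2 * i) ++ [FA O S' i, FB O S' i]) ++ [0]) from by simp,
        List.dropLast_concat]
    have hlen'' : (degenAt c i).length = 2 * i + 2 := by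
      rw [hc'', List.length_append, hu_len]; rfl
    refine ⟨?_, ?_, ?_, ?_⟩
    · refine ⟨S', hVS', ?_, ?_, ?_⟩
      · refine Or.inr ⟨by omega, ?_, ?_⟩
        · rw [hlen'', show (2 * i + 2) / 2 = i + 1 by omega]; exact hdrop.1
        · rw [hlen'', show (2 * i + 2) / 2 = i + 1 by omega]; exact hdrop.2
      · intro t ht
        rw [hlen''] at ht
        rcases lt_or_ge t i with h | h
        · rw [hc'', List.getD_append _ _ _ _ (by rw [hu_len]; omega),
            getD_take_eq c (2 * i) (2 * t) (by omega) (by omega),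
            hA t (by omega), hFA' t (by omega) (by omega)]
        · have h3 : t = i := by omega
          rw [h3, hc'', List.getD_append_right _ _ _ _ (by rw [hu_len]),
            hu_len, show 2 * i - 2 * i = 0 by omega]
          rfl
      · intro t ht
        rw [hlen''] at ht
        rcases lt_or_ge t i with h | h
        · rw [hc'', List.getD_append _ _ _ _ (by rw [hu_len]; omega),
            getD_take_eq c (2 * i) (2 * t + 1) (by omega) (by omega),
            hB t (by omega), hFB' t (by omega) (by omega)]
        · have h3 : t = i := by omega
          rw [h3, hc'', List.getD_append_right _ _ _ _ (by rw [hu_len]; omega),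
            hu_len, show 2 * i + 1 - 2 * i = 1 by omega]
          rfl
    · rw [hc'']
      conv_rhs => rw [hcsplit]
      rw [List.sum_append, List.sum_append]
      simp only [List.sum_cons, List.sum_nil]
      omega
    · intro m
      conv_lhs => rw [hcsplit]
      rw [hc'', List.take_append, List.take_append,
        List.sum_append, List.sum_append, hu_len]
      have hc2 := take2_sum_le (c.getD (2 * i) 0) (c.getD (2 * i + 1) 0)
        (c.getD (2 * i + 2) 0) (c.getD (2 * i + 3) 0) (FA O S' i) (FB O S' i)
        hn1 (by omega) (m - 2 * i)
      omega
    · conv_lhs => rw [hcsplit]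
      rw [hc'', List.take_append, List.take_append,
        List.sum_append, List.sum_append, hu_len, show 2 * i + 2 - 2 * i = 2 by omega]
      have l1 : (([c.getD (2 * i) 0, c.getD (2 * i + 1) 0, c.getD (2 * i + 2) 0,
          c.getD (2 * i + 3) 0] : List ℕ).take 2).sum
          = c.getD (2 * i) 0 + c.getD (2 * i + 1) 0 := by simp
      have l2 : (([FA O S' i, FB O S' i] : List ℕ).take 2).sum
          = FA O S' i + FB O S' i := by simp
      omega
  · -- non-truncating case
    have hc' : degenAt c i = c.take (2 * i)
        ++ [FA O S' i, FB O S' i, FA O S' (i + 1), FB O S' (i + 1)]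
        ++ c.drop (2 * i + 4) := by
      rw [hDA, if_neg hdrop]
    have hlen' : (degenAt c i).length = c.length := by
      rw [hc', List.length_append, List.length_append, hu_len, List.length_drop]
      simp only [hmid4]
      omega
    have hgm := getD_mid c i hlen (FA O S' i) (FB O S' i) (FA O S' (i + 1)) (FB O S' (i + 1))
    refine ⟨?_, ?_, ?_, ?_⟩
    · refine ⟨S', hVS', ?_, ?_, ?_⟩
      · rw [hlen']
        rcases hL with h | ⟨h1, h2, h3⟩
        · exact Or.inl h
        · refine Or.inr ⟨h1, ?_, ?_⟩
          · rw [hFA' (c.length / 2) (by omega) (by omega)]; exact h2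
          · rw [hFB' (c.length / 2) (by omega) (by omega)]; exact h3
      · intro t ht
        rw [hlen'] at ht
        rw [hc', hgm (2 * t)]
        rcases lt_or_ge t i with h | h
        · rw [if_pos (by omega), hA t (by omega), hFA' t (by omega) (by omega)]
        · rcases lt_or_ge t (i + 2) with h2 | h2
          · rcases Nat.eq_or_lt_of_le h with h3 | h3
            · rw [if_neg (by omega), if_pos (by omega), ← h3]
            · have : t = i + 1 := by omega
              subst this
              rw [if_neg (by omega), if_neg (by omega), if_neg (by omega),
                if_pos (by omega)]
          · rw [if_neg (by omega), if_neg (by omega), if_neg (by omega), if_neg (by omega),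
              if_neg (by omega), hA t (by omega), hFA' t (by omega) (by omega)]
      · intro t ht
        rw [hlen'] at ht
        rw [hc', hgm (2 * t + 1)]
        rcases lt_or_ge t i with h | h
        · rw [if_pos (by omega), hB t (by omega), hFB' t (by omega) (by omega)]
        · rcases lt_or_ge t (i + 2) with h2 | h2
          · rcases Nat.eq_or_lt_of_le h with h3 | h3
            · rw [if_neg (by omega), if_neg (by omega), if_pos (by omega), ← h3]
            · have : t = i + 1 := by omega
              subst this
              rw [if_neg (by omega), if_neg (by omega), if_neg (by omega), if_neg (by omega),
                if_pos (by omega)]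
          · rw [if_neg (by omega), if_neg (by omega), if_neg (by omega), if_neg (by omega),
              if_neg (by omega), hB t (by omega), hFB' t (by omega) (by omega)]
    · rw [hc']
      conv_rhs => rw [hcsplit]
      rw [List.sum_append, List.sum_append, List.sum_append, List.sum_append]
      simp only [List.sum_cons, List.sum_nil]
      omega
    · intro m
      conv_lhs => rw [hcsplit]
      rw [hc', sum_take_append3, sum_take_append3, hu_len]
      simp only [hmid4]
      have hc4 := take4_sum_le (c.getD (2 * i) 0) (c.getD (2 * i + 1) 0)
        (c.getD (2 * i + 2) 0) (c.getD (2 * i + 3) 0)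
        (FA O S' i) (FB O S' i) (FA O S' (i + 1)) (FB O S' (i + 1))
        hn1 hn2 hn3 hn4 (m - 2 * i)
      omega
    · conv_lhs => rw [hcsplit]
      rw [hc', sum_take_append3, sum_take_append3, hu_len]
      simp only [hmid4]
      rw [show 2 * i + 2 - 2 * i = 2 by omega]
      have l1 : (([c.getD (2 * i) 0, c.getD (2 * i + 1) 0, c.getD (2 * i + 2) 0,
          c.getD (2 * i + 3) 0] : List ℕ).take 2).sum
          = c.getD (2 * i) 0 + c.getD (2 * i + 1) 0 := by simp
      have l2 : (([FA O S' i, FB O S' i, FA O S' (i + 1), FB O S' (i + 1)] : List ℕ).take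
          2).sum = FA O S' i + FB O S' i := by simp
      omega

end StepLemma



/-- every member of `Norm(O)` dominates `O` in the prefix-sum
(dominance) order, with equal total sums, and the domination is strict
somewhere unless the member is `O` itself.  (By the standard closure-order
criterion, this says the orbit of `O'` lies in the Zariski closure of the
orbit of `O`, strictly if `O' ≠ O`.) -/
theorem normMem_dominance (O : List ℕ) (hO : TypeC O) (hg : GenericSeq O) :
    ∀ O', NormMem O O' →
      (∀ j, (O.take j).sum ≤ (O'.take j).sum) ∧ O'.sum = O.sum ∧
        (O' ≠ O → ∃ j, (O.take j).sum < (O'.take j).sum) := by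
  have hPW : Wp O := wp_of_chains O.length O le_rfl hO.1 hO.2.1
    (fun C hC => Wp_of_generic (hg C hC))
  have main : ∀ O', NormMem O O' →
      InvF O O' ∧ O'.sum = O.sum ∧ (∀ j, (O.take j).sum ≤ (O'.take j).sum) ∧
        (O' = O ∨ ∃ j, (O.take j).sum < (O'.take j).sum) := by
    intro O' h
    induction h with
    | base =>
      refine ⟨⟨fun _ => false, ?_, Or.inl rfl, ?_, ?_⟩, rfl, fun j => le_rfl, Or.inl rfl⟩
      · intro t ht; exact absurd ht (by simp)
      · intro t ht; simp [FA, avgc, sIf]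
      · intro t ht; simp [FB, avgc, sIf]
    | step c i hmem hl he ih =>
      obtain ⟨hinv, hsum, hdom, hstr⟩ := ih
      obtain ⟨hinv', hsum', hdom', hstr'⟩ := step_main O hO hPW c i hl he hinv
      exact ⟨hinv', by rw [hsum']; exact hsum, fun j => le_trans (hdom j) (hdom' j),
        Or.inr ⟨2 * i + 2, lt_of_le_of_lt (hdom (2 * i + 2)) hstr'⟩⟩
  intro O' h
  obtain ⟨-, hs, hd, hst⟩ := main O' h
  exact ⟨hd, hs, fun hne => hst.resolve_left hne⟩
end

section
/- Let c_0 > c_1 = c_2 > c_3 ≥ 0 be integers of the same parity, so that O = (c_0, c_1, c_2, c_3) is a generic type C column sequence whose chain decomposition is the single chain [c_0 (c_1 c_2) c_3]. Then Norm(O) consists of exactly two elements: O itself and the sequence (c_0, c_1+2, c_2−2, c_3), with the last two entries deleted in case c_2 = 2 and c_3 = 0. -/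
/-- for a generic single chain `[c_0 (c_1 c_2) c_3]`
(so `c_0 > c_1 = c_2 > c_3 ≥ 0`, all of the same parity), `Norm(O)`
consists of exactly the two elements `O` and `(c_0, c_1+2, c_2-2, c_3)`,
with the last two entries deleted when `c_2 = 2` and `c_3 = 0`. -/
theorem norm_of_four_columns (c0 c1 c2 c3 : ℕ) (h01 : c1 < c0) (h12 : c1 = c2)
    (h23 : c3 < c2) (hp01 : c0 % 2 = c1 % 2) (hp23 : c2 % 2 = c3 % 2) :
    {O' : List ℕ | NormMem [c0, c1, c2, c3] O'} =
      {[c0, c1, c2, c3],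
        if c2 = 2 ∧ c3 = 0 then [c0, c1 + 2] else [c0, c1 + 2, c2 - 2, c3]} ∧
    [c0, c1, c2, c3] ≠
      (if c2 = 2 ∧ c3 = 0 then [c0, c1 + 2] else [c0, c1 + 2, c2 - 2, c3]) := by
  have hne01 : ¬ (c0 = c1) := h01.ne'
  have hne23 : ¬ (c2 = c3) := h23.ne'
  have hiff : ((c2 - 2 = 0 ∧ c3 = 0) ↔ (c2 = 2 ∧ c3 = 0)) := by omega
  have hdeg : degenAt [c0, c1, c2, c3] 0 =
      (if c2 = 2 ∧ c3 = 0 then [c0, c1 + 2] else [c0, c1 + 2, c2 - 2, c3]) := by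
    rw [show (if c2 = 2 ∧ c3 = 0 then [c0, c1 + 2] else [c0, c1 + 2, c2 - 2, c3]) =
        (if c2 - 2 = 0 ∧ c3 = 0 then [c0, c1 + 2] else [c0, c1 + 2, c2 - 2, c3]) by
      rw [if_congr hiff.symm rfl rfl]]
    simp only [degenAt, fundDeg]
    norm_num [hne01, hne23]
  constructor
  · ext O'
    simp only [Set.mem_setOf_eq, Set.mem_insert_iff, Set.mem_singleton_iff]
    constructor
    · intro h
      induction h with
      | base => exact Or.inl rfl
      | step c i hc hlen heq ih =>
        rcases ih with rfl | rfl
        · have hi : i = 0 := by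
            simp only [List.length] at hlen; omega
          subst hi
          exact Or.inr hdeg
        · exfalso
          by_cases h20 : c2 = 2 ∧ c3 = 0
          · rw [if_pos h20] at hlen
            simp only [List.length] at hlen; omega
          · rw [if_neg h20] at hlen heq
            have hi : i = 0 := by
              simp only [List.length] at hlen; omega
            subst hi
            norm_num at heq
            omega
    · rintro (rfl | rfl)
      · exact NormMem.base
      · rw [← hdeg]
        exact NormMem.step _ 0 NormMem.base (by simp) (by simpa using h12)
  · intro h
    by_cases h20 : c2 = 2 ∧ c3 = 0
    · rw [if_pos h20] at h
      simp at h
    · rw [if_neg h20] at h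
      simp at h
end

section
/- Let O = (c_0, c_1, …, c_{2p+1}) be a generic type C column sequence whose chain decomposition is the single chain [c_0 (c_1 c_2) … (c_{2p−1} c_{2p}) c_{2p+1}] with p ≥ 1, and set O'' = (c_2, c_3, …, c_{2p+1}). For P ∈ Norm(O''), let P^u be the sequence (c_0, c_1) followed by P, and let P^d be P^u with its first four entries replaced by their fundamental degeneration. Then every P^u and P^d lies in Norm(O), the sequences P^u, P^d over all P ∈ Norm(O'') are pairwise distinct, and Norm(O) = { P^u, P^d : P ∈ Norm(O'') }; consequently |Norm(O)| = 2 |Norm(O'')|, and by induction a generic single chain with p interior pairs satisfies |Norm(O)| = 2^p. -/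
/-!
A generic single chain with `p` interior pairs is `(v 0, v 1, v 1, …, v p, v p, v (p+1))` with
`v (i+1) + 2 ≤ v i`. Degenerating any set `S ⊆ {1, …, p}` of its interior pairs, in any order,
yields a sequence depending on `S` alone, in which exactly the pairs outside `S` are still
interior pairs; degenerating one of them adds it to `S`. So `Norm(O)` is in bijection with the
subsets of `{1, …, p}`, and sorting these subsets by whether they contain the first pair gives
`Norm(O) = {P^u} ⊔ {P^d}` and `|Norm(O)| = 2^p`.
-/

namespace List

variable {α : Type*}

lemma getD_map_range (f : ℕ → α) (d : α) {n k : ℕ} (hk : k < n) :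
    ((range n).map f).getD k d = f k := by
  simp [getD_eq_getElem?_getD, hk]

lemma eq_map_range_of_getD {c : List α} {n : ℕ} {f : ℕ → α} (d : α) (hlen : c.length = n)
    (h : ∀ k < n, c.getD k d = f k) : c = (range n).map f := by
  refine ext_getElem (by simpa using hlen) fun k hk _ => ?_
  rw [getElem_map, getElem_range, ← h k (hlen ▸ hk), getD_eq_getElem _ _ hk]

lemma dropLast_dropLast_map_range (f : ℕ → α) (n : ℕ) :
    ((range (n + 2)).map f).dropLast.dropLast = (range n).map f := by
  simp [range_succ]

lemma getD_splice (c l : List α) (d : α) (m k : ℕ) (hm : m + l.length ≤ c.length) :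
    (c.take m ++ l ++ c.drop (m + l.length)).getD k d =
      if m ≤ k ∧ k < m + l.length then l.getD (k - m) d else c.getD k d := by
  have htake : (c.take m).length = m := by simp; omega
  rw [append_assoc]
  split_ifs with h
  · rw [getD_append_right _ _ _ _ (by omega), htake, getD_append _ _ _ _ (by omega)]
  · rcases Nat.lt_or_ge k m with hk | hk
    · rw [getD_append _ _ _ _ (by omega), getD_eq_getElem _ _ (by omega),
        getD_eq_getElem _ _ (by omega), getElem_take]
    · rw [getD_append_right _ _ _ _ (by omega), htake, getD_append_right _ _ _ _ (by omega)]
      simp only [getD_eq_getElem?_getD, getElem?_drop]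
      congr 2
      omega

end List

namespace SingleChain

/- `degSeq v p S` is the chain `(v 0, v 1, v 1, …, v p, v p, v (p+1))` with the interior pairs
indexed by `S ⊆ {1, …, p}` degenerated. Pair `i` occupies positions `2i-1` (`upperEntry`) and
`2i` (`lowerEntry`); two degenerated neighbours whose values differ by exactly `2` meet in the
middle (the `b_0 = b_1 = b_2` cases of `fundDeg`). When pair `p` degenerates to `(…, 0, 0)`, the
two trailing zeros are cut off (`degLength`). -/
def upperEntry (v : ℕ → ℕ) (S : Finset ℕ) (i : ℕ) : ℕ :=
  if i ∈ S then (if i - 1 ∈ S ∧ v (i - 1) = v i + 2 then v i + 1 else v i + 2) else v i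

def lowerEntry (v : ℕ → ℕ) (S : Finset ℕ) (i : ℕ) : ℕ :=
  if i ∈ S then (if i + 1 ∈ S ∧ v i = v (i + 1) + 2 then v i - 1 else v i - 2) else v i

def entry (v : ℕ → ℕ) (S : Finset ℕ) (k : ℕ) : ℕ :=
  if k % 2 = 0 then lowerEntry v S (k / 2) else upperEntry v S ((k + 1) / 2)

def degLength (v : ℕ → ℕ) (p : ℕ) (S : Finset ℕ) : ℕ :=
  if p ∈ S ∧ v p = 2 ∧ v (p + 1) = 0 then 2 * p else 2 * p + 2

def degSeq (v : ℕ → ℕ) (p : ℕ) (S : Finset ℕ) : List ℕ :=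
  (List.range (degLength v p S)).map (entry v S)

def GapsAtLeastTwo (v : ℕ → ℕ) (p : ℕ) : Prop :=
  ∀ i ≤ p, v (i + 1) + 2 ≤ v i

variable {v : ℕ → ℕ} {p j q : ℕ} {S : Finset ℕ}

lemma GapsAtLeastTwo.tail (hv : GapsAtLeastTwo v (q + 1)) :
    GapsAtLeastTwo (fun i => v (i + 1)) q :=
  fun i hi => hv (i + 1) (by omega)

@[simp]
lemma length_degSeq : (degSeq v p S).length = degLength v p S := by simp [degSeq]

lemma getD_degSeq {k : ℕ} (hk : k < degLength v p S) : (degSeq v p S).getD k 0 = entry v S k :=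
  List.getD_map_range _ _ hk

@[simp]
lemma entry_two_mul (i : ℕ) : entry v S (2 * i) = lowerEntry v S i := by
  simp [entry]

@[simp]
lemma entry_two_mul_add_one (i : ℕ) : entry v S (2 * i + 1) = upperEntry v S (i + 1) := by
  simp [entry, show (2 * i + 1 + 1) / 2 = i + 1 by omega, Nat.add_mod]

lemma entry_insert_of_lt_or_le {k : ℕ} (hk : k < 2 * j ∨ 2 * j + 4 ≤ k) :
    entry v (insert (j + 1) S) k = entry v S k := by
  obtain ⟨i, rfl | rfl⟩ := Nat.even_or_odd' k
  · have : i ≠ j + 1 ∧ i ≠ j := by omega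
    simp [lowerEntry, this]
  · have : i ≠ j ∧ i ≠ j + 1 := by omega
    simp [upperEntry, this]

lemma fundDeg_entries (hjS : j + 1 ∉ S) (h₁ : v (j + 1) + 2 ≤ v j)
    (h₂ : v (j + 2) + 2 ≤ v (j + 1)) :
    fundDeg (entry v S (2 * j)) (entry v S (2 * j + 1)) (entry v S (2 * j + 2))
        (entry v S (2 * j + 3)) =
      (entry v (insert (j + 1) S) (2 * j), entry v (insert (j + 1) S) (2 * j + 1),
        entry v (insert (j + 1) S) (2 * j + 2), entry v (insert (j + 1) S) (2 * j + 3)) := by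
  simp only [show 2 * j + 2 = 2 * (j + 1) by omega, show 2 * j + 3 = 2 * (j + 1) + 1 by omega,
    entry_two_mul, entry_two_mul_add_one, lowerEntry, upperEntry, fundDeg, Finset.mem_insert,
    show j + 1 + 1 = j + 2 by omega, Nat.add_sub_cancel]
  by_cases hj : j ∈ S <;> by_cases hj2 : j + 2 ∈ S <;>
    by_cases e₁ : v j = v (j + 1) + 2 <;> by_cases e₂ : v (j + 1) = v (j + 2) + 2 <;>
    simp [hj, hj2, hjS, e₁, e₂] <;> (try split_ifs) <;> first | rfl | omega

lemma lowerEntry_le (i : ℕ) : lowerEntry v S i ≤ v i := by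
  unfold lowerEntry; split_ifs <;> omega

lemma upperEntry_eq_self_iff {i : ℕ} : upperEntry v S i = v i ↔ i ∉ S := by
  unfold upperEntry; split_ifs <;> simp_all

lemma lt_upperEntry {i : ℕ} (hi : i ∈ S) : v i < upperEntry v S i := by
  unfold upperEntry; split_ifs <;> omega

lemma two_mul_add_four_le_degLength (hj : j < p) (hjS : j + 1 ∉ S) :
    2 * j + 4 ≤ degLength v p S := by
  unfold degLength
  split_ifs with h
  · have : j + 1 ≠ p := fun e => hjS (e ▸ h.1)
    omega
  · omega

lemma interior_pair_degSeq_iff :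
    (2 * j + 3 < (degSeq v p S).length ∧
        (degSeq v p S).getD (2 * j + 1) 0 = (degSeq v p S).getD (2 * j + 2) 0) ↔
      j < p ∧ j + 1 ∉ S := by
  constructor
  · rintro ⟨hlen, heq⟩
    have hjp : j < p := by
      rw [length_degSeq, degLength] at hlen
      split_ifs at hlen <;> omega
    rw [length_degSeq] at hlen
    rw [getD_degSeq (by omega), getD_degSeq (by omega), show 2 * j + 2 = 2 * (j + 1) by omega,
      entry_two_mul_add_one, entry_two_mul] at heq
    refine ⟨hjp, fun hjS => ?_⟩
    have := lt_upperEntry (v := v) hjS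
    have := lowerEntry_le (v := v) (S := S) (j + 1)
    omega
  · rintro ⟨hj, hjS⟩
    have hlen := two_mul_add_four_le_degLength (v := v) hj hjS
    refine ⟨by simp; omega, ?_⟩
    rw [getD_degSeq (by omega), getD_degSeq (by omega), show 2 * j + 2 = 2 * (j + 1) by omega,
      entry_two_mul_add_one, entry_two_mul, upperEntry_eq_self_iff.2 hjS]
    simp [lowerEntry, hjS]

lemma splice_degSeq (hlen : 2 * j + 4 ≤ degLength v p S) :
    (degSeq v p S).take (2 * j) ++
        [entry v (insert (j + 1) S) (2 * j), entry v (insert (j + 1) S) (2 * j + 1),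
          entry v (insert (j + 1) S) (2 * j + 2), entry v (insert (j + 1) S) (2 * j + 3)] ++
        (degSeq v p S).drop (2 * j + 4) =
      (List.range (degLength v p S)).map (entry v (insert (j + 1) S)) := by
  refine List.eq_map_range_of_getD 0 (by simp; omega) fun k hk => ?_
  have := List.getD_splice (degSeq v p S)
    [entry v (insert (j + 1) S) (2 * j), entry v (insert (j + 1) S) (2 * j + 1),
      entry v (insert (j + 1) S) (2 * j + 2), entry v (insert (j + 1) S) (2 * j + 3)]
    0 (2 * j) k (by simpa using hlen)
  simp only [List.length_cons, List.length_nil] at this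
  rw [this]
  split_ifs with h
  · obtain ⟨r, hr, rfl⟩ : ∃ r < 4, k = 2 * j + r := ⟨k - 2 * j, by omega, by omega⟩
    rw [Nat.add_sub_cancel_left]
    interval_cases r <;> rfl
  · rw [getD_degSeq hk, entry_insert_of_lt_or_le (by omega)]

lemma lowered_entries_eq_zero_iff (hv : GapsAtLeastTwo v p)
    (hS : S ⊆ Finset.Icc 1 p) (hj : j < p) :
    (entry v (insert (j + 1) S) (2 * j + 2) = 0 ∧ entry v (insert (j + 1) S) (2 * j + 3) = 0) ↔
      j + 1 = p ∧ v p = 2 ∧ v (p + 1) = 0 := by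
  rw [show 2 * j + 2 = 2 * (j + 1) by omega, show 2 * j + 3 = 2 * (j + 1) + 1 by omega,
    entry_two_mul, entry_two_mul_add_one]
  by_cases hj₂ : j + 2 ∈ S
  · have := (Finset.mem_Icc.1 (hS hj₂)).2
    have := lt_upperEntry (v := v) (Finset.mem_insert_of_mem hj₂ : j + 1 + 1 ∈ insert (j + 1) S)
    simp only [lowerEntry, Finset.mem_insert_self, if_true]
    omega
  · simp only [lowerEntry, upperEntry, Finset.mem_insert, hj₂, true_or, if_true,
      show j + 1 + 1 = j + 2 from rfl, show j + 2 ≠ j + 1 by omega, false_and, false_or,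
      if_false]
    rcases (by omega : j + 1 = p ∨ j + 2 ≤ p) with rfl | hp
    · have := hv (j + 1) le_rfl
      rw [show j + 1 + 1 = j + 2 from rfl] at *
      omega
    · have := hv (j + 2) hp
      omega

lemma degLength_insert (hjS : j + 1 ∉ S) :
    degLength v p (insert (j + 1) S) =
      if j + 1 = p ∧ v p = 2 ∧ v (p + 1) = 0 then 2 * p else degLength v p S := by
  unfold degLength
  by_cases hp : j + 1 = p
  · subst hp
    simp [hjS]
  · simp [Finset.mem_insert, Ne.symm hp, hp]

theorem degenAt_degSeq (hv : GapsAtLeastTwo v p) (hS : S ⊆ Finset.Icc 1 p)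
    (hj : j < p) (hjS : j + 1 ∉ S) :
    degenAt (degSeq v p S) j = degSeq v p (insert (j + 1) S) := by
  have hlen := two_mul_add_four_le_degLength (v := v) hj hjS
  simp only [degenAt]
  rw [getD_degSeq (by omega), getD_degSeq (by omega), getD_degSeq (by omega),
    getD_degSeq (by omega), fundDeg_entries hjS (hv j hj.le) (hv (j + 1) hj), splice_degSeq hlen]
  simp only [lowered_entries_eq_zero_iff hv hS hj]
  rw [degSeq, degLength_insert hjS]
  split_ifs with hdrop
  · have : degLength v p S = 2 * p + 2 := by
      simp [degLength, show p ∉ S from hdrop.1 ▸ hjS]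
    rw [this, List.dropLast_dropLast_map_range]
  · rfl

lemma degSeq_injOn {T : Finset ℕ} (hS : S ⊆ Finset.Icc 1 p) (hT : T ⊆ Finset.Icc 1 p)
    (h : degSeq v p S = degSeq v p T) : S = T := by
  ext i
  by_cases hi : i ∈ Finset.Icc 1 p
  · obtain ⟨j, rfl⟩ : ∃ j, i = j + 1 := ⟨i - 1, by simp at hi; omega⟩
    have hlen : ∀ U : Finset ℕ, 2 * j + 1 < degLength v p U := fun U => by
      simp at hi; unfold degLength; split_ifs <;> omega
    have := congrArg (List.getD · (2 * j + 1) 0) h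
    simp only [getD_degSeq (hlen _), entry_two_mul_add_one] at this
    rw [← not_iff_not, ← upperEntry_eq_self_iff, ← upperEntry_eq_self_iff, this]
  · exact iff_of_false (fun h => hi (hS h)) (fun h => hi (hT h))

theorem normMem_degSeq_iff (hv : GapsAtLeastTwo v p) {Q : List ℕ} :
    NormMem (degSeq v p ∅) Q ↔ ∃ S ⊆ Finset.Icc 1 p, degSeq v p S = Q := by
  constructor
  · intro h
    induction h with
    | base => exact ⟨∅, Finset.empty_subset _, rfl⟩
    | step c j _ hlen heq ih =>
      obtain ⟨S, hS, rfl⟩ := ih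
      obtain ⟨hj, hjS⟩ := interior_pair_degSeq_iff.1 ⟨hlen, heq⟩
      exact ⟨insert (j + 1) S, Finset.insert_subset (by simp; omega) hS,
        (degenAt_degSeq hv hS hj hjS).symm⟩
  · rintro ⟨S, hS, rfl⟩
    induction S using Finset.induction_on with
    | empty => exact NormMem.base
    | insert x T hxT ih =>
      obtain ⟨hx, hT⟩ := Finset.insert_subset_iff.1 hS
      obtain ⟨j, rfl⟩ : ∃ j, x = j + 1 := ⟨x - 1, by simp at hx; omega⟩
      have hj : j < p := by simp at hx; omega
      obtain ⟨hlen, heq⟩ := interior_pair_degSeq_iff.2 ⟨hj, hxT⟩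
      rw [← degenAt_degSeq hv hT hj hxT]
      exact NormMem.step _ j (ih hT) hlen heq

theorem ncard_normMem_degSeq (hv : GapsAtLeastTwo v p) :
    {Q | NormMem (degSeq v p ∅) Q}.ncard = 2 ^ p := by
  have : {Q | NormMem (degSeq v p ∅) Q} = ↑((Finset.Icc 1 p).powerset.image (degSeq v p)) := by
    ext Q
    simp only [Set.mem_ofPred_eq, normMem_degSeq_iff hv, Finset.coe_image, Set.mem_image,
      Finset.mem_coe, Finset.mem_powerset]
  rw [this, Set.ncard_coe_finset, Finset.card_image_of_injOn, Finset.card_powerset,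
    Nat.card_Icc, Nat.add_sub_cancel]
  intro S hS T hT
  exact degSeq_injOn (Finset.mem_powerset.1 hS) (Finset.mem_powerset.1 hT)

lemma add_one_mem_image_add_one {i : ℕ} : i + 1 ∈ S.image (· + 1) ↔ i ∈ S :=
  (add_left_injective 1).mem_finset_image

lemma entry_image_add_one (k : ℕ) :
    entry v (S.image (· + 1)) (k + 2) = entry (fun i => v (i + 1)) S k := by
  obtain ⟨i, rfl | rfl⟩ := Nat.even_or_odd' k
  · rw [show 2 * i + 2 = 2 * (i + 1) by omega, entry_two_mul, entry_two_mul]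
    simp only [lowerEntry, add_one_mem_image_add_one]
  · rw [show 2 * i + 1 + 2 = 2 * (i + 1) + 1 by omega, entry_two_mul_add_one,
      entry_two_mul_add_one]
    simp only [upperEntry, Nat.add_sub_cancel, add_one_mem_image_add_one]

lemma cons_cons_degSeq (h0 : 0 ∉ S) :
    v 0 :: v 1 :: degSeq (fun i => v (i + 1)) q S = degSeq v (q + 1) (S.image (· + 1)) := by
  have hlen : degLength v (q + 1) (S.image (· + 1)) = degLength (fun i => v (i + 1)) q S + 2 := by
    simp only [degLength, add_one_mem_image_add_one]
    split_ifs <;> omega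
  have h1 : 1 ∉ S.image (· + 1) := by simpa using h0
  rw [degSeq, degSeq, hlen, List.range_succ_eq_map, List.range_succ_eq_map]
  simp only [List.map_cons, List.map_map, List.cons.injEq]
  refine ⟨by simp [entry, lowerEntry], by simp [entry, upperEntry, h1], ?_⟩
  congr 1
  funext k
  exact (entry_image_add_one k).symm

lemma zero_notMem_of_subset_Icc (hS : S ⊆ Finset.Icc 1 q) : 0 ∉ S :=
  fun h => by simpa using hS h

lemma one_notMem_image_add_one (h0 : 0 ∉ S) : 1 ∉ S.image (· + 1) := by
  simpa using h0

lemma image_add_one_subset_Icc (hS : S ⊆ Finset.Icc 1 q) :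
    S.image (· + 1) ⊆ Finset.Icc 1 (q + 1) := by
  have := Finset.image_subset_image (f := (· + 1)) hS
  rw [Finset.image_add_right_Icc] at this
  exact this.trans (Finset.Icc_subset_Icc_left one_le_two)

lemma insert_one_image_add_one_subset_Icc (hS : S ⊆ Finset.Icc 1 q) :
    insert 1 (S.image (· + 1)) ⊆ Finset.Icc 1 (q + 1) :=
  Finset.insert_subset (by simp) (image_add_one_subset_Icc hS)

lemma exists_eq_image_add_one {T : Finset ℕ} (hT : T ⊆ Finset.Icc 1 (q + 1)) :
    ∃ S ⊆ Finset.Icc 1 q, T = S.image (· + 1) ∨ T = insert 1 (S.image (· + 1)) := by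
  have hT' : ∀ y ∈ T.erase 1, 2 ≤ y ∧ y ≤ q + 1 := fun y hy => by
    have := Finset.mem_Icc.1 (hT (Finset.mem_of_mem_erase hy))
    have := Finset.ne_of_mem_erase hy
    omega
  refine ⟨(T.erase 1).image (· - 1), fun x hx => ?_, ?_⟩
  · obtain ⟨y, hy, rfl⟩ := Finset.mem_image.1 hx
    have := hT' y hy
    exact Finset.mem_Icc.2 (by omega)
  · have hshift : ((T.erase 1).image (· - 1)).image (· + 1) = T.erase 1 := by
      rw [Finset.image_image]
      conv_rhs => rw [← Finset.image_id' (s := T.erase 1)]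
      refine Finset.image_congr fun y hy => ?_
      have := hT' y hy
      simp only [Function.comp_apply]
      omega
    rw [hshift]
    by_cases h1 : 1 ∈ T
    · exact Or.inr (Finset.insert_erase h1).symm
    · exact Or.inl (Finset.erase_eq_of_notMem h1).symm

lemma degenAt_cons_cons_degSeq (hv : GapsAtLeastTwo v (q + 1))
    (hS : S ⊆ Finset.Icc 1 q) :
    degenAt (v 0 :: v 1 :: degSeq (fun i => v (i + 1)) q S) 0 =
      degSeq v (q + 1) (insert 1 (S.image (· + 1))) := by
  have h0 := zero_notMem_of_subset_Icc hS
  rw [cons_cons_degSeq h0, degenAt_degSeq hv (image_add_one_subset_Icc hS) q.succ_pos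
    (one_notMem_image_add_one h0)]

theorem normMem_cons_cons (hv : GapsAtLeastTwo v (q + 1)) {P : List ℕ}
    (hP : NormMem (degSeq (fun i => v (i + 1)) q ∅) P) :
    NormMem (degSeq v (q + 1) ∅) (v 0 :: v 1 :: P) ∧
      NormMem (degSeq v (q + 1) ∅) (degenAt (v 0 :: v 1 :: P) 0) := by
  obtain ⟨S, hS, rfl⟩ := (normMem_degSeq_iff hv.tail).1 hP
  rw [normMem_degSeq_iff hv, normMem_degSeq_iff hv, degenAt_cons_cons_degSeq hv hS,
    cons_cons_degSeq (zero_notMem_of_subset_Icc hS)]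
  exact ⟨⟨_, image_add_one_subset_Icc hS, rfl⟩,
    ⟨_, insert_one_image_add_one_subset_Icc hS, rfl⟩⟩

theorem setOf_normMem_degSeq_succ (hv : GapsAtLeastTwo v (q + 1)) :
    {Q | NormMem (degSeq v (q + 1) ∅) Q} =
      {Q | ∃ P, NormMem (degSeq (fun i => v (i + 1)) q ∅) P ∧
        (Q = v 0 :: v 1 :: P ∨ Q = degenAt (v 0 :: v 1 :: P) 0)} := by
  ext Q
  constructor
  · intro hQ
    obtain ⟨T, hT, rfl⟩ := (normMem_degSeq_iff hv).1 hQ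
    obtain ⟨S, hS, rfl | rfl⟩ := exists_eq_image_add_one hT
    · exact ⟨_, (normMem_degSeq_iff hv.tail).2 ⟨S, hS, rfl⟩,
        Or.inl (cons_cons_degSeq (zero_notMem_of_subset_Icc hS)).symm⟩
    · exact ⟨_, (normMem_degSeq_iff hv.tail).2 ⟨S, hS, rfl⟩,
        Or.inr (degenAt_cons_cons_degSeq hv hS).symm⟩
  · rintro ⟨P, hP, rfl | rfl⟩
    exacts [(normMem_cons_cons hv hP).1, (normMem_cons_cons hv hP).2]

theorem eq_of_degenAt_cons_cons_eq (hv : GapsAtLeastTwo v (q + 1)) {P P' : List ℕ}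
    (hP : NormMem (degSeq (fun i => v (i + 1)) q ∅) P)
    (hP' : NormMem (degSeq (fun i => v (i + 1)) q ∅) P')
    (h : degenAt (v 0 :: v 1 :: P) 0 = degenAt (v 0 :: v 1 :: P') 0) : P = P' := by
  obtain ⟨S, hS, rfl⟩ := (normMem_degSeq_iff hv.tail).1 hP
  obtain ⟨S', hS', rfl⟩ := (normMem_degSeq_iff hv.tail).1 hP'
  rw [degenAt_cons_cons_degSeq hv hS, degenAt_cons_cons_degSeq hv hS'] at h
  have hins := degSeq_injOn (insert_one_image_add_one_subset_Icc hS)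
    (insert_one_image_add_one_subset_Icc hS') h
  have himage : S.image (· + 1) = S'.image (· + 1) := by
    rw [← Finset.erase_insert (one_notMem_image_add_one (zero_notMem_of_subset_Icc hS)),
      ← Finset.erase_insert (one_notMem_image_add_one (zero_notMem_of_subset_Icc hS')), hins]
  rw [Finset.image_injective (add_left_injective 1) himage]

theorem cons_cons_ne_degenAt (hv : GapsAtLeastTwo v (q + 1)) {P P' : List ℕ}
    (hP : NormMem (degSeq (fun i => v (i + 1)) q ∅) P)
    (hP' : NormMem (degSeq (fun i => v (i + 1)) q ∅) P') :
    v 0 :: v 1 :: P ≠ degenAt (v 0 :: v 1 :: P') 0 := by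
  obtain ⟨S, hS, rfl⟩ := (normMem_degSeq_iff hv.tail).1 hP
  obtain ⟨S', hS', rfl⟩ := (normMem_degSeq_iff hv.tail).1 hP'
  have h0 := zero_notMem_of_subset_Icc hS
  rw [degenAt_cons_cons_degSeq hv hS', cons_cons_degSeq h0]
  intro h
  have := degSeq_injOn (image_add_one_subset_Icc hS) (insert_one_image_add_one_subset_Icc hS') h
  exact one_notMem_image_add_one h0 (this ▸ Finset.mem_insert_self 1 _)

lemma chains_cons_cons_ne_nil (a b : ℕ) (l : List ℕ) : chains (a :: b :: l) ≠ [] := by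
  unfold chains
  cases chains l with
  | nil => simp
  | cons C L => dsimp only; split_ifs <;> simp

lemma chains_eq_singleton_cons_cons {x y : ℕ} {r : List ℕ} (hr : r ≠ [])
    (h : chains (x :: y :: r) = [x :: y :: r]) : y ≤ r.headI ∧ chains r = [r] := by
  match r, hr with
  | [c], _ => simp [chains] at h
  | c :: d :: r', _ =>
    obtain ⟨C, L, hCL⟩ := List.exists_cons_of_ne_nil (chains_cons_cons_ne_nil c d r')
    rw [chains, hCL] at h
    dsimp only at h
    split_ifs at h with hlt
    · simp at h
    · obtain ⟨⟨-, -, rfl⟩, rfl⟩ := by simpa using h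
      exact ⟨not_lt.1 hlt, hCL⟩

lemma getD_odd_le_of_chains_eq_singleton {l : List ℕ} (hl : chains l = [l]) {k : ℕ}
    (hk : 2 * k + 2 < l.length) : l.getD (2 * k + 1) 0 ≤ l.getD (2 * k + 2) 0 := by
  induction k generalizing l with
  | zero =>
    match l, hk with
    | x :: y :: c :: r, _ => simpa using (chains_eq_singleton_cons_cons (by simp) hl).1
  | succ k ih =>
    match l, hk with
    | x :: y :: r, hk =>
      have hr : r ≠ [] := by rintro rfl; simp at hk
      simpa [Nat.mul_succ] using
        ih (chains_eq_singleton_cons_cons hr hl).2 (by simp at hk; omega)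

lemma getD_odd_eq_of_chains_eq_singleton {l : List ℕ} (hc : l.IsChain (· ≥ ·))
    (hl : chains l = [l]) {k : ℕ} (hk : 2 * k + 2 < l.length) :
    l.getD (2 * k + 1) 0 = l.getD (2 * k + 2) 0 := by
  refine le_antisymm (getD_odd_le_of_chains_eq_singleton hl hk) ?_
  rw [List.getD_eq_getElem _ _ hk, List.getD_eq_getElem _ _ (by omega)]
  exact List.isChain_iff_getElem.1 hc (2 * k + 1) hk

lemma degSeq_empty (v : ℕ → ℕ) (p : ℕ) :
    degSeq v p ∅ = (List.range (2 * p + 2)).map fun k => v ((k + 1) / 2) := by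
  simp only [degSeq, degLength, Finset.notMem_empty, false_and, if_false]
  congr 1
  funext k
  obtain ⟨i, rfl | rfl⟩ := Nat.even_or_odd' k
  · simp [lowerEntry, show (2 * i + 1) / 2 = i by omega]
  · simp [upperEntry, show (2 * i + 1 + 1) / 2 = i + 1 by omega]

theorem exists_degSeq_of_single_generic_chain {a b : ℕ} {rest : List ℕ}
    (hq : rest.length = 2 * q + 2) (hO : TypeC (a :: b :: rest))
    (hchain : chains (a :: b :: rest) = [a :: b :: rest])
    (hgen : GenericChain (a :: b :: rest)) :
    ∃ v : ℕ → ℕ, GapsAtLeastTwo v (q + 1) ∧ a = v 0 ∧ b = v 1 ∧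
      rest = degSeq (fun i => v (i + 1)) q ∅ := by
  set O := a :: b :: rest
  have hlen : O.length = 2 * q + 4 := by simp [O, hq]
  have hpair : ∀ k, 2 * k + 2 < O.length → O.getD (2 * k + 1) 0 = O.getD (2 * k + 2) 0 :=
    fun k hk => getD_odd_eq_of_chains_eq_singleton hO.2.1 hchain hk
  have hstep : ∀ k, 2 * k + 1 < O.length → O.getD (2 * k + 1) 0 + 2 ≤ O.getD (2 * k) 0 := by
    intro k hk
    obtain ⟨t, ht⟩ := hO.2.2 k hk
    have hlt : O.getD (2 * k + 1) 0 < O.getD (2 * k) 0 := by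
      rcases hgen with ⟨h2, -⟩ | ⟨-, hs⟩
      · omega
      · exact hs k hk
    omega
  -- `v i` is the value `c_{2i-1} = c_{2i}` of the `i`-th pair; at `i = 0` the truncated
  -- subtraction reads `c_0`.
  refine ⟨fun i => O.getD (2 * i - 1) 0, fun i hi => ?_, rfl, rfl, ?_⟩
  · rcases i with _ | i
    · simpa using hstep 0 (by omega)
    · show O.getD (2 * (i + 2) - 1) 0 + 2 ≤ O.getD (2 * (i + 1) - 1) 0
      rw [show 2 * (i + 2) - 1 = 2 * (i + 1) + 1 by omega,
        show 2 * (i + 1) - 1 = 2 * i + 1 by omega, hpair i (by omega),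
        show 2 * i + 2 = 2 * (i + 1) by omega]
      exact hstep (i + 1) (by omega)
  · rw [degSeq_empty]
    refine List.eq_map_range_of_getD 0 hq fun k hk => ?_
    obtain ⟨i, rfl | rfl⟩ := Nat.even_or_odd' k
    · simpa [O, show (2 * i + 1) / 2 = i by omega, Nat.mul_succ] using
        (hpair i (by omega)).symm
    · simp [O, show (2 * i + 1 + 1) / 2 = i + 1 by omega, Nat.mul_succ]

end SingleChain

open SingleChain in
/-- for a generic single chain `O = (c_0, c_1) ++ rest` with at
least one interior pair, `Norm(O)` is the disjoint union of the sequences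
`P^u = (c_0, c_1) ++ P` and `P^d = ` (fundamental degeneration of the first
four entries of `P^u`) over `P ∈ Norm(rest)`; consequently
`|Norm(O)| = 2 |Norm(rest)| = 2^p` where `p` is the number of interior
pairs of the chain `O`. -/
theorem norm_single_chain_recursion (a b : ℕ) (rest : List ℕ)
    (hrest : 2 ≤ rest.length) (hO : TypeC (a :: b :: rest))
    (hchain : chains (a :: b :: rest) = [a :: b :: rest])
    (hgen : GenericChain (a :: b :: rest)) :
    (∀ P, NormMem rest P →
        NormMem (a :: b :: rest) (a :: b :: P) ∧
        NormMem (a :: b :: rest) (degenAt (a :: b :: P) 0)) ∧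
    (∀ P P', NormMem rest P → NormMem rest P' →
        (a :: b :: P = a :: b :: P' → P = P') ∧
        (degenAt (a :: b :: P) 0 = degenAt (a :: b :: P') 0 → P = P') ∧
        a :: b :: P ≠ degenAt (a :: b :: P') 0) ∧
    {Q : List ℕ | NormMem (a :: b :: rest) Q} =
      {Q : List ℕ | ∃ P, NormMem rest P ∧
        (Q = a :: b :: P ∨ Q = degenAt (a :: b :: P) 0)} ∧
    {Q : List ℕ | NormMem (a :: b :: rest) Q}.ncard =
      2 * {P : List ℕ | NormMem rest P}.ncard ∧
    {Q : List ℕ | NormMem (a :: b :: rest) Q}.ncard = 2 ^ (rest.length / 2) := by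
  obtain ⟨q, hq⟩ : ∃ q, rest.length = 2 * q + 2 := by
    obtain ⟨t, ht⟩ := hO.1
    exact ⟨t - 2, by simp at ht; omega⟩
  rw [hq, show (2 * q + 2) / 2 = q + 1 by omega]
  obtain ⟨v, hv, rfl, rfl, rfl⟩ := exists_degSeq_of_single_generic_chain hq hO hchain hgen
  rw [cons_cons_degSeq (Finset.notMem_empty 0), Finset.image_empty]
  refine ⟨fun P hP => normMem_cons_cons hv hP, fun P P' hP hP' =>
    ⟨fun h => List.cons_injective (List.cons_injective h), eq_of_degenAt_cons_cons_eq hv hP hP',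
      cons_cons_ne_degenAt hv hP hP'⟩,
    setOf_normMem_degSeq_succ hv, ?_, ncard_normMem_degSeq hv⟩
  rw [ncard_normMem_degSeq hv, ncard_normMem_degSeq hv.tail, pow_succ, mul_comm]
end

section
/- Let O be a generic type C column sequence with chains [c_0 (c_1 c_2) … (c_{2p−1} c_{2p}) c_{2p+1}], …, [d_0 (d_1 d_2) … (d_{2q−1} d_{2q}) d_{2q+1}], and define O^# = ((c_0+c_1)/2, (c_0+c_1)/2, (c_2+c_3)/2, (c_2+c_3)/2, …, (c_{2p}+c_{2p+1})/2, (c_{2p}+c_{2p+1})/2, …, (d_0+d_1)/2, (d_0+d_1)/2, …, (d_{2q}+d_{2q+1})/2, (d_{2q}+d_{2q+1})/2), obtained by replacing each consecutive pair of entries within each chain by two copies of its average. Then: (i) O^# is a type C column sequence with the same total sum as O; (ii) Σ_{i≤j} (O^#)_i ≤ Σ_{i≤j} O_i for every j, so the nilpotent orbit with columns O lies in the Zariski closure of the nilpotent orbit with columns O^#; (iii) every chain of O^# has length 2, so no chain of O^# contains a configuration b_{2i−2} > (b_{2i−1} = b_{2i}) = … = (b_{2j−1} = b_{2j}) > b_{2j+1}.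 -/
/-- `O^#`: replace each consecutive pair of entries by two copies of its
average. -/
def sharp : List ℕ → List ℕ
  | a :: b :: rest => (a + b) / 2 :: (a + b) / 2 :: sharp rest
  | _ => []

/-!
Averaging a pair `a ≥ b` with `a + b` even keeps the parity and the sum, and `(a + b) / 2 ≤ a`,
so prefix sums can only drop. Genericity makes the pair sums `c_{2i} + c_{2i+1}` strictly
decreasing: across a cut `c_{2i+1} > c_{2i+2}` this is automatic, and inside a chain, where
`c_{2i+1} = c_{2i+2}`, the chain has length at least 4, so `c_{2i} > c_{2i+1}` and
`c_{2i+2} > c_{2i+3}`. As the pair sums are even, consecutive averages strictly decrease too,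
so `O^#` is cut after every pair.
-/

namespace TypeC

theorem cons_cons_iff {a b : ℕ} {l : List ℕ} :
    TypeC (a :: b :: l) ↔ Even (a + b) ∧ (a :: b :: l).IsChain (· ≥ ·) ∧ TypeC l := by
  constructor
  · rintro ⟨hlen, hchain, hpair⟩
    refine ⟨by simpa using hpair 0 (by simp), hchain, ?_, ?_, fun i hi => ?_⟩
    · simpa [Nat.even_add_one] using hlen
    · exact hchain.tail.tail
    · simpa [Nat.mul_add] using hpair (i + 1) (by simp; omega)
  · rintro ⟨hab, hchain, hlen, -, hpair⟩
    refine ⟨by simpa [Nat.even_add_one] using hlen, hchain, fun i hi => ?_⟩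
    rcases i with _ | i
    · simpa using hab
    · simpa [Nat.mul_add] using hpair i (by simp at hi; omega)

theorem not_singleton (a : ℕ) : ¬ TypeC [a] := fun h => by simpa using h.1

end TypeC

theorem sum_sharp : ∀ {c : List ℕ}, TypeC c → (sharp c).sum = c.sum
  | [], _ => rfl
  | [a], h => absurd h (TypeC.not_singleton a)
  | a :: b :: l, h => by
    obtain ⟨⟨k, hk⟩, -, hl⟩ := TypeC.cons_cons_iff.mp h
    simp only [sharp, List.sum_cons, sum_sharp hl]
    omega

theorem sum_take_sharp_le :
    ∀ {c : List ℕ}, TypeC c → ∀ j, ((sharp c).take j).sum ≤ (c.take j).sum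
  | [], _, _ => le_rfl
  | [_], _, _ => by simp [sharp]
  | a :: b :: l, h, j => by
    obtain ⟨⟨k, hk⟩, hchain, hl⟩ := TypeC.cons_cons_iff.mp h
    have hab : b ≤ a := (List.isChain_cons_cons.mp hchain).1
    match j with
    | 0 => simp
    | 1 => simp [sharp]; omega
    | j + 2 =>
      simp only [sharp, List.take_succ_cons, List.sum_cons]
      have := sum_take_sharp_le hl j
      omega

theorem isChain_sharp : ∀ {c : List ℕ}, c.IsChain (· ≥ ·) → (sharp c).IsChain (· ≥ ·)
  | [], _ | [_], _ => by simp [sharp]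
  | a :: b :: l, h => by
    have ih := isChain_sharp h.tail.tail
    rcases l with _ | ⟨c, _ | ⟨d, t⟩⟩
    · simp [sharp]
    · simp [sharp]
    · obtain ⟨hab, hbc, hcd, -⟩ : a ≥ b ∧ b ≥ c ∧ c ≥ d ∧ _ := by simpa using h
      simp only [sharp] at ih ⊢
      exact .cons_cons le_rfl (.cons_cons (Nat.div_le_div_right (by omega)) ih)

theorem typeC_sharp : ∀ {c : List ℕ}, TypeC c → TypeC (sharp c)
  | [], h => h
  | [a], h => absurd h (TypeC.not_singleton a)
  | a :: b :: l, h => by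
    obtain ⟨-, hchain, hl⟩ := TypeC.cons_cons_iff.mp h
    exact TypeC.cons_cons_iff.mpr ⟨by simp, isChain_sharp hchain, typeC_sharp hl⟩

theorem exists_chains_cons_cons (a b : ℕ) (l : List ℕ) :
    ∃ t L, chains (a :: b :: l) = (a :: b :: t) :: L := by
  rw [chains]
  split
  · exact ⟨[], [], rfl⟩
  · split
    · exact ⟨[], _, rfl⟩
    · exact ⟨_, _, rfl⟩

theorem chains_cons_cons_of_lt {a b c d : ℕ} {t : List ℕ} (hcb : c < b) :
    chains (a :: b :: c :: d :: t) = [a, b] :: chains (c :: d :: t) := by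
  obtain ⟨t', L, h⟩ := exists_chains_cons_cons c d t
  rw [chains, h]
  simp [hcb]

theorem chains_cons_cons_of_le {a b c d : ℕ} {t C : List ℕ} {L : List (List ℕ)} (hbc : b ≤ c)
    (h : chains (c :: d :: t) = C :: L) :
    chains (a :: b :: c :: d :: t) = (a :: b :: C) :: L := by
  obtain ⟨t', L', h'⟩ := exists_chains_cons_cons c d t
  obtain ⟨rfl, rfl⟩ := List.cons.inj (h.symm.trans h')
  rw [chains, h']
  simp [not_lt.mpr hbc]

theorem GenericChain.of_cons_cons {a b : ℕ} {C : List ℕ} (h : GenericChain (a :: b :: C))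
    (hC : 4 ≤ C.length) : GenericChain C := by
  rcases h with ⟨hlen, -⟩ | ⟨-, hlt⟩
  · simp only [List.length_cons] at hlen; omega
  · exact .inr ⟨by omega, fun i hi => by simpa [Nat.mul_add] using hlt (i + 1) (by simp; omega)⟩

/-- Unlike `GenericSeq`, this passes from `a :: b :: l` to `l`: the first chain of `l` may be the
tail `[c, d]` with `c > d` of a longer generic chain, which is not itself generic. -/
def LongChainsGeneric (c : List ℕ) : Prop :=
  ∀ C ∈ chains c, 4 ≤ C.length → GenericChain C

theorem GenericSeq.longChainsGeneric {c : List ℕ} (h : GenericSeq c) : LongChainsGeneric c :=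
  fun C hC _ => h C hC

theorem LongChainsGeneric.of_cons_cons {a b : ℕ} {l : List ℕ}
    (h : LongChainsGeneric (a :: b :: l)) : LongChainsGeneric l := by
  rcases l with _ | ⟨c, _ | ⟨d, t⟩⟩
  · simp [LongChainsGeneric, chains]
  · simp [LongChainsGeneric, chains]
  intro C hC hlen
  by_cases hcb : c < b
  · exact h C (by rw [chains_cons_cons_of_lt hcb]; exact List.mem_cons_of_mem _ hC) hlen
  obtain ⟨t', L, hrest⟩ := exists_chains_cons_cons c d t
  have hwhole := chains_cons_cons_of_le (a := a) (not_lt.mp hcb) hrest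
  rw [hrest] at hC
  rcases List.mem_cons.mp hC with rfl | hL
  · exact (h (a :: b :: c :: d :: t') (by simp [hwhole]) (by simp)).of_cons_cons hlen
  · exact h C (by simp [hwhole, hL]) hlen

theorem add_lt_add_of_longChainsGeneric {a b c d : ℕ} {t : List ℕ}
    (hc : (a :: b :: c :: d :: t).IsChain (· ≥ ·))
    (hg : LongChainsGeneric (a :: b :: c :: d :: t)) :
    c + d < a + b := by
  obtain ⟨hab, hbc, hcd, -⟩ : a ≥ b ∧ b ≥ c ∧ c ≥ d ∧ _ := by simpa using hc
  rcases hbc.lt_or_eq with hcb | rfl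
  · omega
  obtain ⟨t', L, hrest⟩ := exists_chains_cons_cons c d t
  have hwhole := chains_cons_cons_of_le (a := a) le_rfl hrest
  rcases hg (a :: c :: c :: d :: t') (by simp [hwhole]) (by simp) with ⟨hlen, -⟩ | ⟨-, hlt⟩
  · simp at hlen
  have hca : c < a := by simpa using hlt 0 (by simp)
  have hdc : d < c := by simpa using hlt 1 (by simp)
  omega

def pairSums : List ℕ → List ℕ
  | a :: b :: l => (a + b) :: pairSums l
  | _ => []

theorem isChain_pairSums_of_longChainsGeneric :
    ∀ {c : List ℕ}, c.IsChain (· ≥ ·) → LongChainsGeneric c → (pairSums c).IsChain (· > ·)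
  | [], _, _ | [_], _, _ => by simp [pairSums]
  | a :: b :: l, hc, hg => by
    have ih := isChain_pairSums_of_longChainsGeneric hc.tail.tail hg.of_cons_cons
    rcases l with _ | ⟨c, _ | ⟨d, t⟩⟩
    · simp [pairSums]
    · simp [pairSums]
    · simp only [pairSums] at ih ⊢
      exact .cons_cons (add_lt_add_of_longChainsGeneric hc hg) ih

theorem length_eq_two_of_mem_chains_sharp : ∀ {c : List ℕ}, TypeC c →
    (pairSums c).IsChain (· > ·) → ∀ C ∈ chains (sharp c), C.length = 2
  | [], _, _ | [_], _, _ => by simp [sharp, chains]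
  | a :: b :: l, h, hs => by
    obtain ⟨⟨k, hk⟩, -, hl⟩ := TypeC.cons_cons_iff.mp h
    rcases l with _ | ⟨c, _ | ⟨d, t⟩⟩
    · simp [sharp, chains]
    · simp [sharp, chains]
    obtain ⟨⟨m, hm⟩, -, -⟩ := TypeC.cons_cons_iff.mp hl
    have ih := length_eq_two_of_mem_chains_sharp hl hs.tail
    simp only [pairSums, List.isChain_cons_cons] at hs
    have hlt : (c + d) / 2 < (a + b) / 2 := by omega
    simp only [sharp] at ih ⊢
    rw [chains_cons_cons_of_lt hlt]
    simpa using ih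

/-- for a generic type C column sequence `O`, the sequence
`O^#` is a type C column sequence with the same total sum, it is dominated
by `O` in the prefix-sum order (so the orbit of `O` lies in the closure of
the orbit of `O^#`), and all of its chains have length 2. -/
theorem sharp_properties (O : List ℕ) (hO : TypeC O) (hg : GenericSeq O) :
    TypeC (sharp O) ∧ (sharp O).sum = O.sum ∧
      (∀ j, ((sharp O).take j).sum ≤ (O.take j).sum) ∧
      ∀ C ∈ chains (sharp O), C.length = 2 :=
  ⟨typeC_sharp hO, sum_sharp hO, sum_take_sharp_le hO,
    length_eq_two_of_mem_chains_sharp hO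
      (isChain_pairSums_of_longChainsGeneric hO.2.1 hg.longChainsGeneric)⟩
end

section
/- Let O be a generic type C column sequence with chains [c_0 (c_1 c_2) … (c_{2p−1} c_{2p}) c_{2p+1}], …, [d_0 (d_1 d_2) … (d_{2q−1} d_{2q}) d_{2q+1}]. Consider the two multisets of halved pair sums: M_1 = { (c_0+c_1)/2, (c_2+c_3)/2, …, (c_{2p}+c_{2p+1})/2, …, (d_0+d_1)/2, …, (d_{2q}+d_{2q+1})/2 } (consecutive pairing within each chain) and M_2 = { (c_1+c_2)/2, …, (c_{2p−1}+c_{2p})/2, (c_0+c_{2p+1})/2, …, (d_1+d_2)/2, …, (d_{2q−1}+d_{2q})/2, (d_0+d_{2q+1})/2 } (the interior pairs together with the average of the two end entries, within each chain). Then M_1 = M_2 as multisets if and only if every chain of O has length 2 (i.e. p = … = q = 0). -/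
/-- The multiset of halved sums of consecutive pairs. -/
def pairAvgs : List ℕ → Multiset ℕ
  | a :: b :: rest => (a + b) / 2 ::ₘ pairAvgs rest
  | _ => 0

/-- The multiset attached to a single chain by the second pairing: the
halved sums of its interior pairs together with the average of its two end
entries. -/
def chainM2 (C : List ℕ) : Multiset ℕ :=
  (C.headI + C.getLastD 0) / 2 ::ₘ pairAvgs C.tail.dropLast

/-!
On each chain `[x₀, x₁, x₁, …, x_k, x_k, x_{k+1}]` the two pairings give multisets with the same
sum, so compare sums of squares instead. Peeling off the leading `x₀, x₁, x₁` changes twice the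
defect `∑ M₁² - ∑ M₂²` of the chain by `(x₀ - x₁)(x₁ - x_{k+1}) ≥ 0` (all entries of a chain have
the same parity, so the halvings are exact). Hence the defect of every chain is nonnegative, and
positive for a generic chain of length `≥ 4`. Since `M₁` and `M₂` are the sums over the chains of
the per-chain multisets, `M₁ = M₂` forces every defect to vanish.
-/

def sqSum : Multiset ℕ →+ ℕ :=
  Multiset.sumAddMonoidHom.comp (Multiset.mapAddMonoidHom (· ^ 2))

lemma sqSum_cons (a : ℕ) (M : Multiset ℕ) : sqSum (a ::ₘ M) = a ^ 2 + sqSum M := by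
  simp [sqSum]

lemma two_mul_sq_avg_defect {x y z : ℕ} (hxy : x % 2 = y % 2) (hyz : y % 2 = z % 2) :
    2 * ((((x + y) / 2 : ℕ) : ℤ) ^ 2 + (((y + z) / 2 : ℕ) : ℤ) ^ 2
      - (((x + z) / 2 : ℕ) : ℤ) ^ 2 - (y : ℤ) ^ 2) = ((x : ℤ) - y) * ((y : ℤ) - z) := by
  set u := (x + y) / 2
  set v := (y + z) / 2
  set w := (x + z) / 2
  have hu : 2 * (u : ℤ) = x + y := by omega
  have hv : 2 * (v : ℤ) = y + z := by omega
  have hw : 2 * (w : ℤ) = x + z := by omega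
  have h4 : 2 * (2 * ((u : ℤ) ^ 2 + (v : ℤ) ^ 2 - (w : ℤ) ^ 2 - (y : ℤ) ^ 2))
      = 2 * (((x : ℤ) - y) * ((y : ℤ) - z)) := by
    linear_combination (2 * (u : ℤ) + x + y) * hu + (2 * (v : ℤ) + y + z) * hv
      - (2 * (w : ℤ) + x + z) * hw
  linarith

lemma chainM2_cons_cons_cons (a b : ℕ) {C : List ℕ} (hC : C ≠ []) :
    chainM2 (a :: b :: b :: C) = (a + (b :: C).getLastD 0) / 2 ::ₘ b ::ₘ pairAvgs C.dropLast := by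
  obtain ⟨c, C, rfl⟩ := List.exists_cons_of_ne_nil hC
  have hb : (b + b) / 2 = b := by omega
  simp [chainM2, pairAvgs, List.dropLast_cons_cons, hb]

/-- The recursive form of `IsChainSeq`, together with the parity condition of `TypeC` on each
pair `(b_{2i}, b_{2i+1})`. -/
inductive IsTypeCChain : List ℕ → Prop
  | pair {a b : ℕ} : b ≤ a → a % 2 = b % 2 → IsTypeCChain [a, b]
  | cons {a b : ℕ} {C : List ℕ} : b ≤ a → a % 2 = b % 2 → IsTypeCChain (b :: C) →
      IsTypeCChain (a :: b :: b :: C)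

def pairingGap (C : List ℕ) : ℤ := sqSum (pairAvgs C) - sqSum (chainM2 C)

lemma pairingGap_pair (a b : ℕ) : pairingGap [a, b] = 0 := sub_self _

lemma two_mul_pairingGap_cons {a b : ℕ} {C : List ℕ} (hC : C ≠ []) (hab : a % 2 = b % 2)
    (hbℓ : b % 2 = (b :: C).getLastD 0 % 2) :
    2 * pairingGap (a :: b :: b :: C)
      = 2 * pairingGap (b :: C) + ((a : ℤ) - b) * ((b : ℤ) - (b :: C).getLastD 0) := by
  have hM1 : pairAvgs (a :: b :: b :: C) = (a + b) / 2 ::ₘ pairAvgs (b :: C) := rfl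
  have hM2 : chainM2 (b :: C) = (b + (b :: C).getLastD 0) / 2 ::ₘ pairAvgs C.dropLast := rfl
  rw [pairingGap, pairingGap, hM1, hM2, chainM2_cons_cons_cons a b hC]
  simp only [sqSum_cons, Nat.cast_add, Nat.cast_pow]
  linear_combination two_mul_sq_avg_defect hab hbℓ

namespace IsTypeCChain

variable {l : List ℕ}

lemma tail_ne_nil {b : ℕ} {C : List ℕ} (h : IsTypeCChain (b :: C)) : C ≠ [] := by
  cases h <;> simp

lemma getLastD_le (h : IsTypeCChain l) {x : ℕ} (hx : x ∈ l) : l.getLastD 0 ≤ x := by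
  induction h generalizing x with
  | pair hba => simp at hx ⊢; omega
  | @cons a b C hba _ _ ih =>
    have hℓ : (a :: b :: b :: C).getLastD 0 = (b :: C).getLastD 0 := by
      simp only [List.getLastD_cons]
    have hb := ih List.mem_cons_self
    rw [hℓ]
    simp only [List.mem_cons] at hx
    rcases hx with rfl | rfl | rfl | hx
    · omega
    · exact hb
    · exact hb
    · exact ih (List.mem_cons_of_mem b hx)

lemma getLastD_mod_two (h : IsTypeCChain l) : l.getLastD 0 % 2 = l.headI % 2 := by
  induction h with
  | pair _ hab => simp [hab]
  | @cons a b C _ hab _ ih =>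
    have hℓ : (a :: b :: b :: C).getLastD 0 = (b :: C).getLastD 0 := by
      simp only [List.getLastD_cons]
    simp only [hℓ, ih, List.headI, hab]

lemma pairingGap_nonneg (h : IsTypeCChain l) : 0 ≤ pairingGap l := by
  induction h with
  | pair => simp [pairingGap_pair]
  | @cons a b C hba hab hC ih =>
    have hℓ : (b :: C).getLastD 0 ≤ b := hC.getLastD_le List.mem_cons_self
    have hprod : 0 ≤ ((a : ℤ) - b) * ((b : ℤ) - (b :: C).getLastD 0) :=
      mul_nonneg (by omega) (by omega)
    have := two_mul_pairingGap_cons hC.tail_ne_nil hab hC.getLastD_mod_two.symm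
    linarith

lemma pairingGap_pos (h : IsTypeCChain l) (hg : GenericChain l) (hl : l.length ≠ 2) :
    0 < pairingGap l := by
  cases h with
  | pair => exact absurd rfl hl
  | @cons a b C _ hab hC =>
    obtain ⟨c, C, rfl⟩ := List.exists_cons_of_ne_nil hC.tail_ne_nil
    obtain ⟨hl2, -⟩ | ⟨-, hstrict⟩ := hg
    · exact absurd hl2 hl
    have hba' : b < a := by simpa using hstrict 0 (by simp)
    have hcb : c < b := by simpa using hstrict 1 (by simp)
    have hℓ : (b :: c :: C).getLastD 0 ≤ c := hC.getLastD_le (by simp)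
    have hprod : 0 < ((a : ℤ) - b) * ((b : ℤ) - (b :: c :: C).getLastD 0) :=
      mul_pos (by omega) (by omega)
    have := two_mul_pairingGap_cons hC.tail_ne_nil hab hC.getLastD_mod_two.symm
    linarith [hC.pairingGap_nonneg]

lemma sqSum_chainM2_le (h : IsTypeCChain l) : sqSum (chainM2 l) ≤ sqSum (pairAvgs l) := by
  have := h.pairingGap_nonneg
  rw [pairingGap] at this
  omega

lemma sqSum_chainM2_lt (h : IsTypeCChain l) (hg : GenericChain l) (hl : l.length ≠ 2) :
    sqSum (chainM2 l) < sqSum (pairAvgs l) := by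
  have := h.pairingGap_pos hg hl
  rw [pairingGap] at this
  omega

end IsTypeCChain

lemma pairAvgs_eq_sum_map_chains (O : List ℕ) : pairAvgs O = ((chains O).map pairAvgs).sum := by
  induction O using chains.induct with
  | case1 a b rest h ih => simp [chains, h, pairAvgs, ih]
  | case2 a b rest C L h hsplit ih => simp [chains, h, hsplit, pairAvgs, ih]
  | case3 a b rest C L h hmerge ih => simp [chains, h, hmerge, pairAvgs, ih]
  | case4 t ht =>
    match t, ht with
    | [], _ | [_], _ => rfl
    | a :: b :: rest, ht => exact absurd rfl (ht a b rest)

lemma headI_of_chains_eq_cons {O C : List ℕ} {L : List (List ℕ)} (h : chains O = C :: L) :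
    C.headI = O.headI := by
  match O with
  | [] | [_] => simp [chains] at h
  | a :: b :: rest =>
    rcases hr : chains rest with _ | ⟨C', L'⟩ <;> simp only [chains, hr] at h
    · cases h; rfl
    · split at h <;> (cases h; rfl)

namespace TypeC

variable {a b : ℕ} {rest : List ℕ}

lemma of_cons_cons (h : TypeC (a :: b :: rest)) : TypeC rest := by
  obtain ⟨hlen, hdec, hpar⟩ := h
  refine ⟨by simpa [Nat.even_add_one] using hlen, hdec.tail.tail, fun i hi => ?_⟩
  simpa [Nat.mul_add] using hpar (i + 1) (by simp at hi ⊢; omega)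

lemma fst_mod_two_eq_snd (h : TypeC (a :: b :: rest)) : a % 2 = b % 2 := by
  have := h.2.2 0 (by simp)
  simp only [Nat.mul_zero, List.getD_cons_zero, List.getD_cons_succ] at this
  obtain ⟨k, hk⟩ := this
  omega

lemma snd_le_fst (h : TypeC (a :: b :: rest)) : b ≤ a := (List.isChain_cons_cons.mp h.2.1).1

lemma headI_le_snd (h : TypeC (a :: b :: rest)) : rest.headI ≤ b := by
  cases rest with
  | nil => simp
  | cons c _ => exact (List.isChain_cons_cons.mp h.2.1.tail).1

end TypeC

lemma isTypeCChain_of_mem_chains {O : List ℕ} (hO : TypeC O) :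
    ∀ C ∈ chains O, IsTypeCChain C := by
  induction O using chains.induct with
  | case1 a b rest hr _ =>
    simpa [chains, hr] using IsTypeCChain.pair hO.snd_le_fst hO.fst_mod_two_eq_snd
  | case2 a b rest C L hr hsplit ih =>
    have ih := ih hO.of_cons_cons
    simp only [chains, hr, if_pos hsplit, List.mem_cons]
    rintro D (rfl | rfl | hD)
    · exact .pair hO.snd_le_fst hO.fst_mod_two_eq_snd
    · exact ih D (by simp [hr])
    · exact ih D (by simp [hr, hD])
  | case3 a b rest C L hr hmerge ih =>
    have ih := ih hO.of_cons_cons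
    have hC : IsTypeCChain C := ih C (by simp [hr])
    have hCb : C.headI = b := by
      have := hO.headI_le_snd
      rw [← headI_of_chains_eq_cons hr] at this
      omega
    simp only [chains, hr, if_neg hmerge, List.mem_cons]
    rintro D (rfl | hD)
    · obtain ⟨c, C, rfl⟩ : ∃ c C', C = c :: C' := by cases hC <;> exact ⟨_, _, rfl⟩
      obtain rfl : c = b := hCb
      exact .cons hO.snd_le_fst hO.fst_mod_two_eq_snd hC
    · exact ih D (by simp [hr, hD])
  | case4 t ht =>
    match t, ht with
    | [], _ | [_], _ => simp [chains]
    | a :: b :: rest, ht => exact absurd rfl (ht a b rest)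

/-- for a generic type C column sequence `O`, the multiset of
halved consecutive pair sums equals the multiset of halved interior-pair
sums and end-entry averages (taken chain by chain) if and only if every
chain of `O` has length 2. -/
theorem pairing_multisets_eq_iff (O : List ℕ) (hO : TypeC O) (hg : GenericSeq O) :
    pairAvgs O = ((chains O).map chainM2).sum ↔ ∀ C ∈ chains O, C.length = 2 := by
  have hchain := isTypeCChain_of_mem_chains hO
  rw [pairAvgs_eq_sum_map_chains]
  constructor
  · intro h
    by_contra! ⟨C, hC, hlen⟩
    have hlt := List.sum_lt_sum (sqSum ∘ chainM2) (sqSum ∘ pairAvgs)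
      (fun C hC => (hchain C hC).sqSum_chainM2_le)
      ⟨C, hC, (hchain C hC).sqSum_chainM2_lt (hg C hC) hlen⟩
    rw [← List.map_map, ← List.map_map, ← map_list_sum, ← map_list_sum, h] at hlt
    exact lt_irrefl _ hlt
  · intro h
    congr 1
    refine List.map_congr_left fun C hC => ?_
    obtain ⟨x, y, rfl⟩ := List.length_eq_two.mp (h C hC)
    rfl
end

section
/- Let O be an even generic type C column sequence (all entries even and all chains generic). Then every O' ∈ Norm(O) is special: whenever an entry c'_{2i} in an even position is odd, one has c'_{2i} = c'_{2i+1}. Moreover, the odd entries of O' occur exactly in chains of O' of length 2 of the form [x, x] with x odd. -/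
/-!
The sequence `O` is even and, being generic, has no three equal consecutive entries. From this
we get a local condition `SeqInv` on each pair `(c_{2j}, c_{2j+1})` and its two neighbours, and
it survives every fundamental degeneration: the sequence is weakly decreasing, odd entries only
occur as pairs `x = x` lying at least `2` below the previous entry and `2` above the next one,
and three equal even entries around a pair lie at least `3` away from the fourth neighbour.
These gaps are what a degeneration of a neighbouring quadruple can use up, since it moves each
entry by at most `2`; a degenerated quadruple is even, so the truncation only removes zeros.
Specialness and the shape of the chains containing odd entries are read off the invariant.
-/

theorem exists_cons_cons_of_chains_eq_cons {c C : List ℕ} {L : List (List ℕ)}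
    (h : chains c = C :: L) : ∃ x y r t, c = x :: y :: r ∧ C = x :: y :: t := by
  match c, h with
  | a :: b :: rest, h =>
    refine ⟨a, b, rest, ?_⟩
    cases hr : chains rest with
    | nil =>
      simp only [chains, hr, List.cons.injEq] at h
      exact ⟨[], rfl, h.1.symm⟩
    | cons D L' =>
      simp only [chains, hr] at h
      split_ifs at h <;> simp only [List.cons.injEq] at h
      · exact ⟨[], rfl, h.1.symm⟩
      · exact ⟨D, rfl, h.1.symm⟩

theorem chains_cons_cons_ne_nil (a b : ℕ) (rest : List ℕ) : chains (a :: b :: rest) ≠ [] := by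
  cases hr : chains rest with
  | nil => simp [chains, hr]
  | cons C L => by_cases h : C.headI < b <;> simp [chains, hr, h]

theorem chains_cons_cons_of_lt_s12 {a b : ℕ} {rest C : List ℕ} {L : List (List ℕ)}
    (hr : chains rest = C :: L) (hlt : C.headI < b) :
    chains (a :: b :: rest) = [a, b] :: C :: L := by
  simp [chains, hr, hlt]

theorem chains_cons_cons_of_not_lt {a b : ℕ} {rest C : List ℕ} {L : List (List ℕ)}
    (hr : chains rest = C :: L) (hlt : ¬C.headI < b) :
    chains (a :: b :: rest) = (a :: b :: C) :: L := by
  simp [chains, hr, hlt]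

-- Genericity does not pass from `a :: b :: rest` to `rest` (a merged chain loses its head), this
-- weakening does.
def LongChainsStrict (c : List ℕ) : Prop :=
  ∀ D ∈ chains c, 4 ≤ D.length →
    ∀ i, 2 * i + 1 < D.length → D.getD (2 * i + 1) 0 < D.getD (2 * i) 0

theorem GenericSeq.longChainsStrict {c : List ℕ} (h : GenericSeq c) : LongChainsStrict c :=
  fun D hD hlen => ((h D hD).resolve_left fun h2 => by omega).2

theorem LongChainsStrict.tail {a b : ℕ} {rest : List ℕ}
    (h : LongChainsStrict (a :: b :: rest)) : LongChainsStrict rest := by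
  intro D hD hlen
  obtain ⟨C, L, hr⟩ : ∃ C L, chains rest = C :: L :=
    List.exists_cons_of_ne_nil (List.ne_nil_of_mem hD)
  rw [hr] at hD
  by_cases hlt : C.headI < b
  · exact h D (by rw [chains_cons_cons_of_lt_s12 hr hlt]; exact List.mem_cons_of_mem _ hD) hlen
  · have hc := chains_cons_cons_of_not_lt (a := a) hr hlt
    rcases List.mem_cons.1 hD with rfl | hD
    · intro i hi
      exact h _ (by rw [hc]; exact List.mem_cons_self) (by simp; omega) (i + 1) (by simp; omega)
    · exact h D (by rw [hc]; exact List.mem_cons_of_mem _ hD) hlen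

theorem LongChainsStrict.lt_of_not_lt {a b r0 r1 : ℕ} {t : List ℕ}
    (h : LongChainsStrict (a :: b :: r0 :: r1 :: t)) (hb : ¬r0 < b) : b < a ∧ r1 < r0 := by
  obtain ⟨C, L, hr⟩ : ∃ C L, chains (r0 :: r1 :: t) = C :: L :=
    List.exists_cons_of_ne_nil (chains_cons_cons_ne_nil r0 r1 t)
  obtain ⟨_, _, _, _, hrt, rfl⟩ := exists_cons_cons_of_chains_eq_cons hr
  simp only [List.cons.injEq] at hrt
  obtain ⟨rfl, rfl, rfl⟩ := hrt
  have hD := h _ (by rw [chains_cons_cons_of_not_lt hr hb]; exact List.mem_cons_self) (by simp)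
  exact ⟨hD 0 (by simp), hD 1 (by simp)⟩

theorem LongChainsStrict.not_triple_infix :
    ∀ {c : List ℕ}, Even c.length → LongChainsStrict c → ∀ x, ¬[x, x, x] <:+: c
  | [], _, _, _, hx => by simpa using hx.length_le
  | [_], he, _, _, _ => by simp at he
  | a :: b :: rest, he, h, x, hx => by
    have he' : Even rest.length := by simpa [Nat.even_add_one] using he
    rw [List.infix_cons_iff, List.infix_cons_iff] at hx
    rcases hx with ⟨t, ht⟩ | ⟨t, ht⟩ | hx
    · obtain ⟨rfl, rfl, rfl⟩ : x = a ∧ x = b ∧ x :: t = rest := by simpa using ht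
      obtain ⟨y, t, rfl⟩ : ∃ y t', t = y :: t' :=
        List.exists_cons_of_ne_nil (by rintro rfl; simp at he')
      exact (lt_irrefl _ (h.lt_of_not_lt (lt_irrefl x)).1)
    · obtain ⟨rfl, rfl⟩ : x = b ∧ x :: x :: t = rest := by simpa using ht
      exact (lt_irrefl _ (h.lt_of_not_lt (lt_irrefl x)).2)
    · exact h.tail.not_triple_infix he' x hx

-- The condition at a pair `(x, y) = (c_{2j}, c_{2j+1})`; its neighbours `l = c_{2j-1}` and
-- `r = c_{2j+2}` are `none` at the ends of the sequence.
def PairInv (l : Option ℕ) (x y : ℕ) (r : Option ℕ) : Prop :=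
  y ≤ x ∧ (∀ a ∈ l, x ≤ a) ∧ (∀ b ∈ r, b ≤ y) ∧
    (Odd x ∨ Odd y → x = y ∧ (∀ a ∈ l, x + 2 ≤ a) ∧ ∀ b ∈ r, b + 2 ≤ x) ∧
    ∀ a ∈ l, ∀ b ∈ r, Even x → (x = y → y = b → x + 3 ≤ a) ∧ (a = x → x = y → b + 3 ≤ a)

-- `l` is the entry preceding the list.
def SeqInv : Option ℕ → List ℕ → Prop
  | l, x :: y :: rest => PairInv l x y rest.head? ∧ SeqInv (some y) rest
  | _, [] => True
  | _, [_] => False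

theorem pairInv_fundDeg {l r : Option ℕ} {b0 b1 b2 b3 q0 q1 q2 q3 : ℕ}
    (hq : fundDeg b0 b1 b2 b3 = (q0, q1, q2, q3)) (hb : b1 = b2) (hkeep : ¬(q2 = 0 ∧ q3 = 0))
    (h0 : PairInv l b0 b1 (some b2)) (h1 : PairInv (some b1) b2 b3 r) :
    PairInv l q0 q1 (some q2) ∧ PairInv (some q1) q2 q3 r := by
  unfold fundDeg at hq
  rcases l with _ | l <;> rcases r with _ | r <;>
  simp [PairInv, Nat.odd_iff, Nat.even_iff] at * <;>
  split_ifs at hq <;> simp only [Prod.mk.injEq] at hq <;> grind (splits := 30)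

theorem pairInv_fundDeg_next {r : Option ℕ} {b0 b1 b2 b3 q0 q1 q2 q3 r0 r1 : ℕ}
    (hq : fundDeg b0 b1 b2 b3 = (q0, q1, q2, q3)) (hb : b1 = b2)
    (h1 : PairInv (some b1) b2 b3 (some r0)) (h2 : PairInv (some b3) r0 r1 r) :
    PairInv (some q3) r0 r1 r := by
  unfold fundDeg at hq
  rcases r with _ | r <;>
  simp [PairInv, Nat.odd_iff, Nat.even_iff] at * <;>
  split_ifs at hq <;> simp only [Prod.mk.injEq] at hq <;> grind (splits := 30)

theorem pairInv_fundDeg_prev {l : Option ℕ} {a b b0 b1 b2 b3 q0 q1 q2 q3 : ℕ}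
    (hq : fundDeg b0 b1 b2 b3 = (q0, q1, q2, q3)) (hb : b1 = b2)
    (hp : PairInv l a b (some b0)) (h0 : PairInv (some b) b0 b1 (some b2)) :
    PairInv l a b (some q0) := by
  unfold fundDeg at hq
  rcases l with _ | l <;>
  simp [PairInv, Nat.odd_iff, Nat.even_iff] at * <;>
  split_ifs at hq <;> simp only [Prod.mk.injEq] at hq <;> grind (splits := 30)

theorem eq_zero_of_fundDeg_eq_zero {r : Option ℕ} {b0 b1 b2 b3 q0 q1 : ℕ}
    (hq : fundDeg b0 b1 b2 b3 = (q0, q1, 0, 0)) (hb : b1 = b2)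
    (h1 : PairInv (some b1) b2 b3 r) : b3 = 0 := by
  unfold fundDeg at hq
  rcases r with _ | r <;>
  simp [PairInv, Nat.odd_iff] at h1 <;>
  split_ifs at hq <;> simp only [Prod.mk.injEq] at hq <;> omega

theorem pairInv_fundDeg_of_eq_zero {l r : Option ℕ} {b0 b1 b2 b3 q0 q1 : ℕ}
    (hq : fundDeg b0 b1 b2 b3 = (q0, q1, 0, 0)) (hb : b1 = b2)
    (h0 : PairInv l b0 b1 (some b2)) (h1 : PairInv (some b1) b2 b3 r) :
    PairInv l q0 q1 r := by
  unfold fundDeg at hq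
  rcases l with _ | l <;> rcases r with _ | r <;>
  simp [PairInv, Nat.odd_iff, Nat.even_iff] at * <;>
  split_ifs at hq <;> simp only [Prod.mk.injEq] at hq <;> grind (splits := 30)

theorem seqInv_some_zero : ∀ {c : List ℕ}, SeqInv (some 0) c → c = [] ∨ c = [0, 0]
  | [], _ => Or.inl rfl
  | x :: y :: rest, ⟨⟨hyx, hx, _, _, htriple⟩, _⟩ => by
    obtain rfl : x = 0 := Nat.le_zero.1 (hx 0 rfl)
    obtain rfl : y = 0 := Nat.le_zero.1 hyx
    cases rest with
    | nil => exact Or.inr rfl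
    | cons z rest => exact absurd ((htriple 0 rfl z rfl .zero).2 rfl rfl) (by omega)

theorem degenAt_cons_cons (a b : ℕ) (c : List ℕ) (i : ℕ) :
    degenAt (a :: b :: c) (i + 1) = a :: b :: degenAt c i := by
  simp only [degenAt, Nat.mul_succ, List.getD_cons_succ, List.take_succ_cons, List.drop_succ_cons]
  split_ifs <;> simp [List.dropLast_cons_of_ne_nil, List.dropLast_append_of_ne_nil]

theorem degenAt_zero {b0 b1 b2 b3 q0 q1 q2 q3 : ℕ} (rest : List ℕ)
    (hq : fundDeg b0 b1 b2 b3 = (q0, q1, q2, q3)) :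
    degenAt (b0 :: b1 :: b2 :: b3 :: rest) 0 =
      if q2 = 0 ∧ q3 = 0 then (q0 :: q1 :: q2 :: q3 :: rest).dropLast.dropLast
      else q0 :: q1 :: q2 :: q3 :: rest := by
  simp [degenAt, hq]

theorem seqInv_degenAt_zero {l : Option ℕ} {b0 b1 b2 b3 : ℕ} {rest : List ℕ}
    (h : SeqInv l (b0 :: b1 :: b2 :: b3 :: rest)) (hb : b1 = b2) :
    SeqInv l (degenAt (b0 :: b1 :: b2 :: b3 :: rest) 0) := by
  obtain ⟨⟨q0, q1, q2, q3⟩, hq⟩ : ∃ q, fundDeg b0 b1 b2 b3 = q := ⟨_, rfl⟩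
  obtain ⟨h0, h1, hrest⟩ := h
  rw [degenAt_zero rest hq]
  split_ifs with hdrop
  · -- the truncating case: then `b3 = 0`, and `rest` is `[]` or `[0, 0]`
    obtain ⟨rfl, rfl⟩ := hdrop
    obtain rfl := eq_zero_of_fundDeg_eq_zero hq hb h1
    rcases seqInv_some_zero hrest with rfl | rfl
    · exact ⟨pairInv_fundDeg_of_eq_zero hq hb h0 h1, trivial⟩
    · refine ⟨pairInv_fundDeg_of_eq_zero hq hb h0 h1, by simp [PairInv], trivial⟩
  · obtain ⟨hn0, hn1⟩ := pairInv_fundDeg hq hb hdrop h0 h1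
    refine ⟨hn0, hn1, ?_⟩
    match rest, h1, hrest with
    | [], _, _ => trivial
    | _ :: _ :: _, h1, ⟨h2, hrest⟩ => exact ⟨pairInv_fundDeg_next hq hb h1 h2, hrest⟩

theorem pairInv_head?_degenAt {l : Option ℕ} {a b : ℕ} {c : List ℕ} {i : ℕ}
    (hp : PairInv l a b c.head?) (hc : SeqInv (some b) c) (hi : 2 * i + 3 < c.length)
    (hb : c.getD (2 * i + 1) 0 = c.getD (2 * i + 2) 0) : PairInv l a b (degenAt c i).head? := by
  match c, i, hc with
  | b0 :: b1 :: b2 :: b3 :: rest, 0, ⟨h0, _⟩ =>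
    obtain ⟨⟨q0, q1, q2, q3⟩, hq⟩ : ∃ q, fundDeg b0 b1 b2 b3 = q := ⟨_, rfl⟩
    have hhead : (degenAt (b0 :: b1 :: b2 :: b3 :: rest) 0).head? = some q0 := by
      rw [degenAt_zero rest hq]; split_ifs <;> simp
    rw [hhead]
    exact pairInv_fundDeg_prev hq hb hp h0
  | _ :: _ :: _, _ + 1, _ => rwa [degenAt_cons_cons]
  | [], _, _ | [_], _, _ | [_, _], 0, _ | [_, _, _], 0, _ => simp at hi

theorem seqInv_degenAt : ∀ {l : Option ℕ} {c : List ℕ} {i : ℕ}, SeqInv l c →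
    2 * i + 3 < c.length → c.getD (2 * i + 1) 0 = c.getD (2 * i + 2) 0 →
    SeqInv l (degenAt c i)
  | _, _ :: _ :: _ :: _ :: _, 0, h, _, hb => seqInv_degenAt_zero h hb
  | _, _ :: _ :: c, i + 1, ⟨hp, hc⟩, hi, hb => by
    have hi' : 2 * i + 3 < c.length := by simp at hi; omega
    rw [degenAt_cons_cons]
    exact ⟨pairInv_head?_degenAt hp hc hi' hb, seqInv_degenAt hc hi' hb⟩
  | _, [], _, _, hi, _ | _, [_], _, _, hi, _ | _, [_, _], 0, _, hi, _
  | _, [_, _, _], 0, _, hi, _ => by simp at hi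

theorem seqInv_of_not_triple_infix : ∀ {l : Option ℕ} {c : List ℕ}, Even c.length →
    (l.toList ++ c).IsChain (· ≥ ·) → (∀ x ∈ c, Even x) →
    (∀ x, ¬[x, x, x] <:+: l.toList ++ c) → SeqInv l c
  | _, [], _, _, _, _ => trivial
  | _, [_], he, _, _, _ => by simp at he
  | l, x :: y :: rest, he, hc, hev, hnt => by
    have hsuffix : y :: rest <:+: l.toList ++ x :: y :: rest := ⟨l.toList ++ [x], [], by simp⟩
    refine ⟨?_, seqInv_of_not_triple_infix (by simpa [Nat.even_add_one] using he)
      (hc.infix hsuffix) (fun z hz => hev z (by simp [hz]))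
      (fun z hz => hnt z (hz.trans hsuffix))⟩
    have hpair : ∀ u v, [u, v] <:+: l.toList ++ x :: y :: rest → v ≤ u :=
      fun u v h => (List.isChain_pair (R := (· ≥ ·))).1 (hc.infix h)
    refine ⟨hpair x y ⟨l.toList, rest, by simp⟩, ?_, ?_, ?_, ?_⟩
    · rintro a rfl
      exact hpair a x ⟨[], y :: rest, by simp⟩
    · intro b hb
      obtain ⟨t, rfl⟩ : ∃ t, rest = b :: t := List.head?_eq_some_iff.1 hb
      exact hpair y b ⟨l.toList ++ [x], t, by simp⟩
    · rintro (h | h)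
      · exact absurd (hev x (by simp)) (Nat.not_even_iff_odd.2 h)
      · exact absurd (hev y (by simp)) (Nat.not_even_iff_odd.2 h)
    · rintro a rfl b hb -
      obtain ⟨t, rfl⟩ : ∃ t, rest = b :: t := List.head?_eq_some_iff.1 hb
      refine ⟨?_, ?_⟩
      · rintro rfl rfl
        exact absurd ⟨[a], t, rfl⟩ (hnt x)
      · rintro rfl rfl
        exact absurd ⟨[], b :: t, rfl⟩ (hnt a)

theorem PairInv.odd_mem_iff {l r : Option ℕ} {a b : ℕ} (h : PairInv l a b r) :
    (∃ x ∈ [a, b], Odd x) ↔ ∃ x, Odd x ∧ [a, b] = [x, x] := by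
  obtain ⟨-, -, -, hodd, -⟩ := h
  constructor
  · rintro ⟨x, hx, hxo⟩
    simp only [List.mem_cons, List.not_mem_nil, or_false] at hx
    rcases hx with rfl | rfl
    · exact ⟨x, hxo, by rw [(hodd (Or.inl hxo)).1]⟩
    · exact ⟨x, hxo, by rw [(hodd (Or.inr hxo)).1]⟩
  · rintro ⟨x, hxo, hab⟩
    exact ⟨x, by simp [hab], hxo⟩

theorem SeqInv.eq_of_odd : ∀ {l : Option ℕ} {c : List ℕ}, SeqInv l c →
    ∀ i, 2 * i + 1 < c.length → Odd (c.getD (2 * i) 0) → c.getD (2 * i) 0 = c.getD (2 * i + 1) 0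
  | _, _ :: _ :: _, ⟨⟨_, _, _, hodd, _⟩, _⟩, 0, _, hx => (hodd (Or.inl hx)).1
  | _, _ :: _ :: _, ⟨_, h⟩, i + 1, hi, hx => h.eq_of_odd i (by simp at hi; omega) hx
  | _, [], _, _, hi, _ => by simp at hi
  | _, [_], h, _, _, _ => h.elim

theorem SeqInv.odd_mem_iff : ∀ {l : Option ℕ} {c : List ℕ}, SeqInv l c →
    ∀ C ∈ chains c, ((∃ x ∈ C, Odd x) ↔ ∃ x, Odd x ∧ C = [x, x])
  | _, [], _, _, hC => by simp [chains] at hC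
  | _, [_], h, _, _ => h.elim
  | _, a :: b :: rest, ⟨hp, hrest⟩, C, hC => by
    cases hr : chains rest with
    | nil =>
      obtain rfl : C = [a, b] := by simpa [chains, hr] using hC
      exact hp.odd_mem_iff
    | cons C' L =>
      obtain ⟨r0, r1, rest', t, rfl, rfl⟩ := exists_cons_cons_of_chains_eq_cons hr
      by_cases hlt : r0 < b
      · rw [chains_cons_cons_of_lt_s12 hr hlt, ← hr] at hC
        rcases List.mem_cons.1 hC with rfl | hC
        · exact hp.odd_mem_iff
        · exact hrest.odd_mem_iff C hC
      · -- `(a, b)` joins the chain of `rest`, so `b = r0` leaves no room for an odd pair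
        rw [chains_cons_cons_of_not_lt hr hlt] at hC
        rcases List.mem_cons.1 hC with rfl | hC
        · refine iff_of_false ?_ (by rintro ⟨x, -, h⟩; simp at h)
          rintro ⟨x, hx, hxo⟩
          obtain ⟨-, -, -, hodd, -⟩ := hp
          simp only [List.head?_cons, Option.mem_def, Option.some.injEq, forall_eq'] at hodd
          rcases List.mem_cons.1 hx with rfl | hx
          · have := hodd (Or.inl hxo)
            omega
          rcases List.mem_cons.1 hx with rfl | hx
          · have := hodd (Or.inr hxo)
            omega
          obtain ⟨y, hyo, hy⟩ :=
            (hrest.odd_mem_iff _ (by rw [hr]; exact List.mem_cons_self)).1 ⟨x, hx, hxo⟩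
          obtain ⟨rfl, rfl, rfl⟩ : r0 = y ∧ r1 = y ∧ t = [] := by simpa using hy
          obtain ⟨⟨-, -, -, hodd', -⟩, -⟩ := hrest
          have := (hodd' (Or.inl hyo)).2.1 b rfl
          omega
        · exact hrest.odd_mem_iff C (by rw [hr]; exact List.mem_cons_of_mem _ hC)

/-- for an even generic type C column sequence `O`, every
member of `Norm(O)` is special (an odd entry in an even position equals the
next entry), and a chain of a member contains an odd entry exactly when it
is of the form `[x, x]` with `x` odd. -/
theorem normMem_special (O : List ℕ) (hO : TypeC O) (hg : GenericSeq O)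
    (he : ∀ x ∈ O, Even x) :
    ∀ O', NormMem O O' →
      (∀ i, 2 * i + 1 < O'.length → Odd (O'.getD (2 * i) 0) →
        O'.getD (2 * i) 0 = O'.getD (2 * i + 1) 0) ∧
      ∀ C ∈ chains O', ((∃ x ∈ C, Odd x) ↔ ∃ x, Odd x ∧ C = [x, x]) := by
  intro O' hO'
  have hinv : SeqInv none O' := by
    induction hO' with
    | base =>
      exact seqInv_of_not_triple_infix hO.1 hO.2.1 he
        (hg.longChainsStrict.not_triple_infix hO.1)
    | step c i _ hi hc ih => exact seqInv_degenAt ih hi hc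
  exact ⟨hinv.eq_of_odd, hinv.odd_mem_iff⟩
end

section
/- Let O be a type C column sequence one of whose chains contains consecutive entries b_{2i−2} > (b_{2i−1} = b_{2i}) = … = (b_{2j−1} = b_{2j}) > b_{2j+1} for some 1 ≤ i ≤ j. Let O' be obtained from O by replacing the entry b_{2i−1} by b_{2i−1} + 2 and the entry b_{2j} by b_{2j} − 2. Then O' is again a type C column sequence with the same total sum, and Σ_{m≤n} (O')_m ≥ Σ_{m≤n} O_m for every n, with strict inequality for some n; hence the nilpotent orbit with columns O' is strictly contained in the Zariski closure of the nilpotent orbit with columns O. -/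
/-!
Raising the entry at position `2s+1` by 2 and lowering the one at `2t` by 2 moves two boxes
from a later column to an earlier one, so the total is unchanged and the prefix sums grow by 2
exactly for `2s+1 < n ≤ 2t`. Every entry keeps its parity, and the sequence can only stop being
weakly decreasing at the two outer neighbours `2s` and `2t+1`; there the strict drops together
with the parity condition on the pairs `(2s, 2s+1)` and `(2t, 2t+1)` leave a gap of at least 2.
-/

namespace List

theorem getD_set_of_lt {l : List ℕ} {i : ℕ} (a : ℕ) (hi : i < l.length) (m : ℕ) :
    (l.set i a).getD m 0 = if m = i then a else l.getD m 0 := by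
  rw [getD_eq_getElem?_getD, getD_eq_getElem?_getD, getElem?_set]
  by_cases h : m = i
  · subst h; simp [hi]
  · simp [Ne.symm h, h]

theorem sum_take_eq_sum_range_getD (l : List ℕ) (n : ℕ) :
    (l.take n).sum = ∑ m ∈ Finset.range n, l.getD m 0 := by
  induction n with
  | zero => simp
  | succ n ih =>
    rw [take_add_one, sum_append, ih, Finset.sum_range_succ, getD_eq_getElem?_getD]
    cases l[n]? <;> simp

theorem lt_length_of_getD_ne {α : Type*} {l : List α} {n : ℕ} {d : α} (h : l.getD n d ≠ d) :
    n < l.length :=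
  lt_of_not_ge fun hn => h (getD_eq_default _ _ hn)

theorem isChain_ge_iff_getD {l : List ℕ} :
    l.IsChain (· ≥ ·) ↔ ∀ i, i + 1 < l.length → l.getD (i + 1) 0 ≤ l.getD i 0 := by
  rw [isChain_iff_getElem]
  refine forall_congr' fun i => forall_congr' fun hi => ?_
  rw [getD_eq_getElem _ _ hi, getD_eq_getElem _ _ (by omega)]

end List

def transfer (l : List ℕ) (p q d : ℕ) : List ℕ :=
  (l.set p (l.getD p 0 + d)).set q (l.getD q 0 - d)

section transfer

variable {l : List ℕ} {p q d : ℕ}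

@[simp]
theorem length_transfer : (transfer l p q d).length = l.length := by
  simp [transfer]

theorem getD_transfer (hp : p < l.length) (hq : q < l.length) (m : ℕ) :
    (transfer l p q d).getD m 0 =
      if m = q then l.getD q 0 - d else if m = p then l.getD p 0 + d else l.getD m 0 := by
  rw [transfer, List.getD_set_of_lt _ (by simpa using hq), List.getD_set_of_lt _ hp]

theorem getD_transfer_add (hp : p < l.length) (hq : q < l.length) (hpq : p ≠ q)
    (hd : d ≤ l.getD q 0) (m : ℕ) :
    (transfer l p q d).getD m 0 + (if m = q then d else 0) =
      l.getD m 0 + (if m = p then d else 0) := by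
  rw [getD_transfer hp hq]
  split_ifs <;> subst_vars <;> omega

theorem sum_take_transfer_add (hp : p < l.length) (hq : q < l.length) (hpq : p ≠ q)
    (hd : d ≤ l.getD q 0) (n : ℕ) :
    ((transfer l p q d).take n).sum + (if q < n then d else 0) =
      (l.take n).sum + (if p < n then d else 0) := by
  simp only [List.sum_take_eq_sum_range_getD, ← Finset.mem_range]
  rw [← Finset.sum_ite_eq' _ q fun _ => d, ← Finset.sum_ite_eq' _ p fun _ => d,
    ← Finset.sum_add_distrib, ← Finset.sum_add_distrib]
  exact Finset.sum_congr rfl fun m _ => getD_transfer_add hp hq hpq hd m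

theorem sum_transfer (hpq : p < q) (hq : q < l.length) (hd : d ≤ l.getD q 0) :
    (transfer l p q d).sum = l.sum := by
  simpa [hq, hpq.trans hq, List.take_of_length_le] using
    sum_take_transfer_add (hpq.trans hq) hq hpq.ne hd l.length

theorem sum_take_le_sum_take_transfer (hpq : p < q) (hq : q < l.length) (hd : d ≤ l.getD q 0)
    (n : ℕ) : (l.take n).sum ≤ ((transfer l p q d).take n).sum := by
  have := sum_take_transfer_add (hpq.trans hq) hq hpq.ne hd n
  split_ifs at this <;> omega

theorem sum_take_lt_sum_take_transfer (hpq : p < q) (hq : q < l.length) (hd : d ≤ l.getD q 0)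
    (hd₀ : 0 < d) : (l.take (p + 1)).sum < ((transfer l p q d).take (p + 1)).sum := by
  have := sum_take_transfer_add (hpq.trans hq) hq hpq.ne hd (p + 1)
  rw [if_neg (by omega), if_pos p.lt_succ_self] at this
  omega

theorem even_getD_transfer_iff (hp : p < l.length) (hq : q < l.length) (hd : d ≤ l.getD q 0)
    (hd₂ : Even d) (m : ℕ) : Even ((transfer l p q d).getD m 0) ↔ Even (l.getD m 0) := by
  rw [getD_transfer hp hq]
  split_ifs with hmq hmp
  · rw [hmq, Nat.even_sub hd]; simp [hd₂]
  · rw [hmp, Nat.even_add]; simp [hd₂]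
  · rfl

theorem isChain_transfer {i : ℕ} (hl : l.IsChain (· ≥ ·)) (hiq : i + 1 < q) (hq : q < l.length)
    (hi : l.getD (i + 1) 0 + d ≤ l.getD i 0) (hd : l.getD (q + 1) 0 + d ≤ l.getD q 0) :
    (transfer l (i + 1) q d).IsChain (· ≥ ·) := by
  rw [List.isChain_ge_iff_getD] at hl ⊢
  intro j hj
  rw [length_transfer] at hj
  have := hl j hj
  rw [getD_transfer (hiq.trans hq) hq, getD_transfer (hiq.trans hq) hq]
  simp only [Nat.add_right_cancel_iff]
  split_ifs <;> subst_vars <;> omega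

end transfer

namespace TypeC

variable {c : List ℕ}

theorem getD_odd_add_two_le (hc : TypeC c) {i : ℕ} (h : c.getD (2 * i + 1) 0 < c.getD (2 * i) 0) :
    c.getD (2 * i + 1) 0 + 2 ≤ c.getD (2 * i) 0 := by
  have hi : 2 * i < c.length := List.lt_length_of_getD_ne ((Nat.zero_le _).trans_lt h).ne'
  obtain ⟨k, hk⟩ := hc.2.2 i (by obtain ⟨m, hm⟩ := hc.1; omega)
  omega

protected theorem transfer (hc : TypeC c) {i q d : ℕ} (hd : Even d) (hiq : i + 1 < q)
    (hq : q < c.length) (hi : c.getD (i + 1) 0 + d ≤ c.getD i 0)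
    (hq' : c.getD (q + 1) 0 + d ≤ c.getD q 0) : TypeC (transfer c (i + 1) q d) := by
  refine ⟨by simpa using hc.1, isChain_transfer hc.2.1 hiq hq hi hq', fun j hj => ?_⟩
  rw [length_transfer] at hj
  rw [Nat.even_add, even_getD_transfer_iff (hiq.trans hq) hq (by omega) hd,
    even_getD_transfer_iff (hiq.trans hq) hq (by omega) hd, ← Nat.even_add]
  exact hc.2.2 j hj

end TypeC

theorem kp_configuration_degeneration_general (O : List ℕ) (hO : TypeC O)
    (s t : ℕ) (hst : s < t)
    (hdrop1 : O.getD (2 * s + 1) 0 < O.getD (2 * s) 0)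
    (hdrop2 : O.getD (2 * t + 1) 0 < O.getD (2 * t) 0) :
    ∀ O', O' = (O.set (2 * s + 1) (O.getD (2 * s + 1) 0 + 2)).set (2 * t)
        (O.getD (2 * t) 0 - 2) →
      TypeC O' ∧ O'.sum = O.sum ∧
        (∀ n, (O.take n).sum ≤ (O'.take n).sum) ∧
        ∃ n, (O.take n).sum < (O'.take n).sum := by
  rintro O' rfl
  have hs := hO.getD_odd_add_two_le hdrop1
  have ht := hO.getD_odd_add_two_le hdrop2
  have hq : 2 * t < O.length := List.lt_length_of_getD_ne ((Nat.zero_le _).trans_lt hdrop2).ne'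
  have hpq : 2 * s + 1 < 2 * t := by omega
  have hd : 2 ≤ O.getD (2 * t) 0 := by omega
  exact ⟨hO.transfer even_two hpq hq hs ht, sum_transfer hpq hq hd,
    sum_take_le_sum_take_transfer hpq hq hd, _, sum_take_lt_sum_take_transfer hpq hq hd two_pos⟩

/-- if a chain of a type C column sequence `O` contains a
Kraft–Procesi configuration
`b_{2i-2} > (b_{2i-1} = b_{2i}) = … = (b_{2j-1} = b_{2j}) > b_{2j+1}`
(here the entry before the equal block sits at the even position `2s`, the
equal block occupies positions `2s+1, …, 2t`, and the entry after it sits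
at position `2t+1`), then raising the entry at position `2s+1` by 2 and
lowering the one at position `2t` by 2 yields a type C column sequence with
the same total sum which strictly dominates `O` in the prefix-sum order;
hence its orbit is strictly contained in the closure of the orbit of `O`. -/
theorem kp_configuration_degeneration (O : List ℕ) (hO : TypeC O)
    (s t : ℕ) (hst : s < t) (hlen : 2 * t + 1 < O.length)
    (hdrop1 : O.getD (2 * s + 1) 0 < O.getD (2 * s) 0)
    (heq : ∀ m, 2 * s + 1 ≤ m → m < 2 * t → O.getD m 0 = O.getD (m + 1) 0)
    (hdrop2 : O.getD (2 * t + 1) 0 < O.getD (2 * t) 0) :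
    ∀ O', O' = (O.set (2 * s + 1) (O.getD (2 * s + 1) 0 + 2)).set (2 * t)
        (O.getD (2 * t) 0 - 2) →
      TypeC O' ∧ O'.sum = O.sum ∧
        (∀ n, (O.take n).sum ≤ (O'.take n).sum) ∧
        ∃ n, (O.take n).sum < (O'.take n).sum :=
  kp_configuration_degeneration_general O hO s t hst hdrop1 hdrop2
end
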